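/- arXiv:2407.17168 — 6 statements merged into one kernel-verified Lean document; each statement's English description precedes it below -/
import Mathlib

section
/- The number of r-Dyck paths from (0,0) to (rn,n) that never go below the line y = x/r equals the Fuss–Catalan number (1/(rn+1)) * binomial((r+1)n, n). -/
/-! Give an up step the weight `r` and a right step the weight `-1`. A cyclic word with `n` up
steps and `r * n + 1` right steps has total weight `-1`, and exactly one of its `(r + 1) * n + 1`
rotations has all prefix sums nonnegative except the full one (the cycle lemma): the rotation
starting at the first minimum of the prefix sums. That rotation ends with a right step, and
removing it leaves an `r`-Dyck path. Counting pairs (word, rotation) both ways gives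
`((r + 1) * n + 1) * #Dyck = choose ((r + 1) * n + 1) n`, which is equivalent to the claim. -/

open Finset

open scoped Classical in
/-- An `r`-Dyck path of length `n`, encoded as a word `w` of length `(r+1)*n` in the
alphabet `Bool`, where `false` denotes an up step `(0,1)` and `true` denotes a right
step `(1,0)`.  The path goes from `(0,0)` to `(r*n, n)` (it has `n` up steps and
`r*n` right steps) and never goes strictly below the line `y = x/r`, i.e. every
prefix contains at most `r` times as many right steps as up steps. -/
def IsRDyck (r n : ℕ) (w : Fin ((r + 1) * n) → Bool) : Prop :=
  (univ.filter (fun i => w i = false)).card = n ∧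
  ∀ k : ℕ,
    (univ.filter (fun i : Fin ((r + 1) * n) => (i : ℕ) < k ∧ w i = true)).card ≤
      r * (univ.filter (fun i : Fin ((r + 1) * n) => (i : ℕ) < k ∧ w i = false)).card

namespace RDyck

open Fin.NatCast

def IsRaneyShift (S : ℕ → ℤ) (N t : ℕ) : Prop := ∀ k < N, S t ≤ S (t + k)

section Raney

variable {S : ℕ → ℤ} {N : ℕ}

theorem IsRaneyShift.lt_of_lt (hS : ∀ k, S (k + N) = S k - 1) {t j : ℕ}
    (ht : IsRaneyShift S N t) (hjt : j < t) (htj : t < j + N) : S t < S j := by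
  have h := ht (j + N - t) (by omega)
  rw [show t + (j + N - t) = j + N by omega, hS] at h
  omega

theorem IsRaneyShift.unique (hS : ∀ k, S (k + N) = S k - 1) {t t' : ℕ}
    (ht : IsRaneyShift S N t) (ht' : IsRaneyShift S N t') (htN : t < N) (ht'N : t' < N) :
    t = t' := by
  by_contra hne
  wlog hlt : t < t' generalizing t t'
  · exact this ht' ht ht'N htN (Ne.symm hne) (by omega)
  have h := ht (t' - t) (by omega)
  rw [Nat.add_sub_cancel' hlt.le] at h
  have := ht'.lt_of_lt hS hlt (by omega)
  omega

theorem exists_isRaneyShift (hS : ∀ k, S (k + N) = S k - 1) (hN : 0 < N) :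
    ∃ t < N, IsRaneyShift S N t := by
  classical
  obtain ⟨m, hm, hmin⟩ := (range N).exists_min_image S (nonempty_range_iff.2 hN.ne')
  -- take the first minimum: earlier points lie strictly higher, absorbing the drop per period
  have hex : ∃ t, t < N ∧ S t = S m := ⟨m, mem_range.1 hm, rfl⟩
  obtain ⟨htN, htm⟩ := Nat.find_spec hex
  refine ⟨Nat.find hex, htN, fun k hk => ?_⟩
  rcases lt_or_ge (Nat.find hex + k) N with h | h
  · rw [htm]
    exact hmin _ (mem_range.2 h)
  · have hne := Nat.find_min hex (m := Nat.find hex + k - N) (by omega)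
    have hle := hmin (Nat.find hex + k - N) (mem_range.2 (by omega))
    rw [show Nat.find hex + k = Nat.find hex + k - N + N by omega, hS]
    omega

end Raney

section Height

variable (r : ℕ) {N : ℕ} [NeZero N]

/-- Prefix sums of the periodic extension of `W` (the cast `ℕ → Fin N` reduces mod `N`), with
weight `r` for `false` and `-1` for `true`. -/
def height (W : Fin N → Bool) (k : ℕ) : ℤ :=
  ∑ i ∈ range k, if W (i : Fin N) then -1 else (r : ℤ)

theorem height_eq_sub_card (W : Fin N → Bool) (k : ℕ) :
    height r W k = r * #{i ∈ range k | W ((i : ℕ) : Fin N) = false} -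
      #{i ∈ range k | W ((i : ℕ) : Fin N) = true} := by
  simp only [height, Int.reduceNeg, sum_ite, sum_neg_distrib, sum_const, Int.nsmul_eq_mul,
    mul_one, Bool.not_eq_true]
  ring

theorem height_add_period (W : Fin N → Bool) (k : ℕ) :
    height r W (k + N) = height r W k + height r W N := by
  simp [height, add_comm k N, sum_range_add, add_comm]

theorem height_period_eq (W : Fin N → Bool) :
    height r W N = (r + 1) * #{i | W i = false} - N := by
  have hcard := card_filter_add_card_filter_not (s := univ) (fun i : Fin N => W i = false)
  rw [height, ← Fin.sum_univ_eq_sum_range (fun i => if W i then -1 else (r : ℤ))]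
  simp only [Bool.not_eq_false, card_univ, Fintype.card_fin, Fin.cast_val_eq_self, sum_ite,
    sum_neg_distrib, sum_const, Int.nsmul_eq_mul, mul_one, Bool.not_eq_true] at hcard ⊢
  push_cast [← hcard]
  ring

theorem height_rotate (W : Fin N → Bool) (t : Fin N) (k : ℕ) :
    height r (fun i => W (i + t)) k = height r W (t + k) - height r W t := by
  simp only [height, sum_range_add, add_sub_cancel_left, Nat.cast_add, Fin.cast_val_eq_self,
    add_comm t]

theorem isRaneyShift_rotate_iff (W : Fin N → Bool) (t : Fin N) :
    IsRaneyShift (height r fun i => W (i + t)) N 0 ↔ IsRaneyShift (height r W) N t := by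
  simp only [IsRaneyShift, height_rotate, add_zero, sub_self, zero_add, sub_nonneg]

theorem card_filter_rotate (W : Fin N → Bool) (t : Fin N) (b : Bool) :
    #{i | W (i + t) = b} = #{i | W i = b} :=
  card_nbij' (· + t) (· - t) (fun i => by simp) (fun i => by simp) (fun i _ => by simp)
    (fun i _ => by simp)

end Height

section Snoc

variable {L : ℕ} (d : Fin L → Bool)

theorem snoc_natCast (i : Fin L) : (Fin.snoc d true : Fin (L + 1) → Bool) (i : ℕ) = d i := by
  rw [← Fin.val_castSucc, Fin.cast_val_eq_self, Fin.snoc_castSucc]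

theorem card_filter_val_lt_eq_snoc (k : ℕ) (b : Bool) :
    #{i : Fin L | (i : ℕ) < k ∧ d i = b} =
      #{i ∈ range (min k L) | (Fin.snoc d true : Fin (L + 1) → Bool) (i : ℕ) = b} := by
  rw [← card_map Fin.valEmbedding]
  congr 1
  ext j
  simp only [mem_map, mem_filter, mem_univ, true_and, Fin.valEmbedding_apply, mem_range, lt_min_iff]
  constructor
  · rintro ⟨i, ⟨hik, hib⟩, rfl⟩
    exact ⟨⟨hik, i.isLt⟩, by rw [snoc_natCast, hib]⟩
  · rintro ⟨⟨hjk, hjL⟩, hjb⟩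
    exact ⟨⟨j, hjL⟩, ⟨hjk, by rwa [← snoc_natCast d ⟨j, hjL⟩]⟩, rfl⟩

theorem card_filter_snoc_true (b : Bool) :
    #{i | (Fin.snoc d true : Fin (L + 1) → Bool) i = b} =
      #{i | d i = b} + if b then 1 else 0 := by
  rw [card_filter, card_filter, Fin.sum_univ_castSucc]
  cases b <;> simp

end Snoc

theorem card_filter_card_false_eq_choose {α : Type*} [Fintype α] [DecidableEq α] (n : ℕ) :
    #{f : α → Bool | #{a | f a = false} = n} = (Fintype.card α).choose n := by
  rw [← card_univ, ← card_powersetCard]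
  refine card_nbij' (fun f => ({a | f a = false} : Finset α)) (fun s a => decide (a ∉ s))
    ?_ ?_ ?_ ?_
  · intro f hf
    simpa [mem_powersetCard] using hf
  · intro s hs
    simp_all [mem_powersetCard]
  · intro f _
    funext a
    cases h : f a <;> simp [h]
  · intro s _
    ext a
    simp

section Counting

open scoped Classical

variable (r n : ℕ)

theorem isRDyck_iff (d : Fin ((r + 1) * n) → Bool) :
    IsRDyck r n d ↔ #{i | (Fin.snoc d true : Fin ((r + 1) * n + 1) → Bool) i = false} = n ∧
      ∀ k < (r + 1) * n + 1,
        0 ≤ height r (Fin.snoc d true : Fin ((r + 1) * n + 1) → Bool) k := by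
  have key : ∀ k, #{i : Fin ((r + 1) * n) | (i : ℕ) < k ∧ d i = true} ≤
        r * #{i : Fin ((r + 1) * n) | (i : ℕ) < k ∧ d i = false} ↔
      0 ≤ height r (Fin.snoc d true : Fin ((r + 1) * n + 1) → Bool) (min k ((r + 1) * n)) := by
    intro k
    rw [height_eq_sub_card, card_filter_val_lt_eq_snoc, card_filter_val_lt_eq_snoc, sub_nonneg]
    norm_cast
  rw [IsRDyck, card_filter_snoc_true]
  simp only [key, Bool.false_eq_true, if_false, add_zero]
  refine and_congr Iff.rfl ⟨fun h k hk => ?_, fun h k => h _ (by omega)⟩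
  simpa [min_eq_left (Nat.lt_succ_iff.1 hk)] using h k

variable {r n}

theorem height_add_period_of_card {W : Fin ((r + 1) * n + 1) → Bool}
    (hW : #{i | W i = false} = n) (k : ℕ) :
    height r W (k + ((r + 1) * n + 1)) = height r W k - 1 := by
  rw [height_add_period, height_period_eq, hW]
  push_cast
  ring

theorem card_filter_isRaneyShift_eq_one {W : Fin ((r + 1) * n + 1) → Bool}
    (hW : #{i | W i = false} = n) :
    #{t : Fin ((r + 1) * n + 1) | IsRaneyShift (height r W) ((r + 1) * n + 1) t} = 1 := by
  have hS := height_add_period_of_card hW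
  obtain ⟨t, htN, ht⟩ := exists_isRaneyShift hS (Nat.succ_pos _)
  rw [card_eq_one]
  refine ⟨⟨t, htN⟩, ?_⟩
  ext s
  simp only [mem_filter, mem_univ, true_and, mem_singleton]
  exact ⟨fun hs => Fin.ext (hs.unique hS ht s.isLt htN), fun h => h ▸ ht⟩

theorem last_eq_true_of_height_nonneg {W : Fin ((r + 1) * n + 1) → Bool}
    (hW : #{i | W i = false} = n) (hpos : ∀ k < (r + 1) * n + 1, 0 ≤ height r W k) :
    W (Fin.last _) = true := by
  have hN : height r W ((r + 1) * n + 1) = -1 := by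
    rw [height_period_eq, hW]
    push_cast
    ring
  have hL := hpos ((r + 1) * n) (Nat.lt_succ_self _)
  rw [height, sum_range_succ, ← height, Fin.natCast_eq_last] at hN
  cases h : W (Fin.last _)
  · simp [h] at hN
    omega
  · rfl

theorem card_filter_isRaneyShift_eq_card_zero {N : ℕ} [NeZero N] (t : Fin N) :
    #{W : Fin N → Bool | #{i | W i = false} = n ∧ IsRaneyShift (height r W) N t} =
      #{W : Fin N → Bool | #{i | W i = false} = n ∧ IsRaneyShift (height r W) N 0} := by
  refine card_nbij' (fun W i => W (i + t)) (fun W i => W (i - t)) ?_ ?_ ?_ ?_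
  · intro W hW
    simp_all [card_filter_rotate, isRaneyShift_rotate_iff]
  · intro W hW
    have := isRaneyShift_rotate_iff r (fun i => W (i - t)) t
    have hc := card_filter_rotate (fun i => W (i - t)) t false
    simp_all
  · intro W _
    funext i
    simp
  · intro W _
    funext i
    simp

theorem card_filter_isRaneyShift_zero_eq_card_isRDyck :
    #{W : Fin ((r + 1) * n + 1) → Bool |
        #{i | W i = false} = n ∧ IsRaneyShift (height r W) ((r + 1) * n + 1) 0} =
      #{d | IsRDyck r n d} := by
  have hzero : ∀ W : Fin ((r + 1) * n + 1) → Bool,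
      IsRaneyShift (height r W) ((r + 1) * n + 1) 0 ↔
        ∀ k < (r + 1) * n + 1, 0 ≤ height r W k := by
    simp [IsRaneyShift, height]
  refine card_nbij' Fin.init (fun d => Fin.snoc d true) ?_ ?_ ?_ ?_
  · rintro W hW
    simp only [coe_filter, mem_univ, true_and, Set.mem_ofPred_eq, hzero] at hW ⊢
    have hsnoc : W = Fin.snoc (Fin.init W) true := by
      rw [← last_eq_true_of_height_nonneg hW.1 hW.2, Fin.snoc_init_self]
    rw [hsnoc] at hW
    exact (isRDyck_iff r n _).2 hW
  · intro d hd
    simp only [coe_filter, mem_univ, true_and, Set.mem_ofPred_eq, hzero] at hd ⊢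
    exact (isRDyck_iff r n d).1 hd
  · rintro W hW
    simp only [coe_filter, mem_univ, true_and, Set.mem_ofPred_eq, hzero] at hW
    rw [← last_eq_true_of_height_nonneg hW.1 hW.2]
    exact Fin.snoc_init_self W
  · intro d _
    exact Fin.init_snoc _ _

variable (r n) in
theorem succ_mul_card_isRDyck :
    ((r + 1) * n + 1) * #{d | IsRDyck r n d} = ((r + 1) * n + 1).choose n := by
  calc ((r + 1) * n + 1) * #{d | IsRDyck r n d}
      = ∑ t : Fin ((r + 1) * n + 1), #{W : Fin ((r + 1) * n + 1) → Bool |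
          #{i | W i = false} = n ∧ IsRaneyShift (height r W) ((r + 1) * n + 1) t} := by
        simp [card_filter_isRaneyShift_eq_card_zero, card_filter_isRaneyShift_zero_eq_card_isRDyck]
    _ = ∑ W : Fin ((r + 1) * n + 1) → Bool with #{i | W i = false} = n,
          #{t : Fin ((r + 1) * n + 1) | IsRaneyShift (height r W) ((r + 1) * n + 1) t} := by
        simp only [← filter_filter, card_filter]
        exact sum_comm
    _ = ((r + 1) * n + 1).choose n := by
        rw [sum_congr rfl fun W hW => card_filter_isRaneyShift_eq_one (mem_filter.1 hW).2,
          ← card_eq_sum_ones, card_filter_card_false_eq_choose, Fintype.card_fin]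

end Counting

end RDyck

open scoped Classical in
theorem rDyck_card_fussCatalan_general (r n : ℕ) :
    (r * n + 1) * (univ.filter (fun w : Fin ((r + 1) * n) → Bool => IsRDyck r n w)).card =
      Nat.choose ((r + 1) * n) n := by
  have hcount := RDyck.succ_mul_card_isRDyck r n
  have hchoose := Nat.choose_mul_succ_eq ((r + 1) * n) n
  rw [show (r + 1) * n + 1 - n = r * n + 1 by rw [add_mul, one_mul]; omega] at hchoose
  apply Nat.eq_of_mul_eq_mul_left ((r + 1) * n).succ_pos
  calc ((r + 1) * n + 1) * ((r * n + 1) * #{w | IsRDyck r n w})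
      = ((r + 1) * n + 1).choose n * (r * n + 1) := by rw [mul_left_comm, hcount, mul_comm]
    _ = ((r + 1) * n + 1) * ((r + 1) * n).choose n := by rw [← hchoose, mul_comm]

open scoped Classical in
/-- The number of `r`-Dyck paths from `(0,0)` to `(rn, n)` staying weakly above
`y = x/r` is the Fuss–Catalan number `(1/(rn+1)) * binom((r+1)n, n)`. -/
theorem rDyck_card_fussCatalan (r n : ℕ) (hr : 1 ≤ r) :
    (r * n + 1) * (univ.filter (fun w : Fin ((r + 1) * n) → Bool => IsRDyck r n w)).card =
      Nat.choose ((r + 1) * n) n :=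
  rDyck_card_fussCatalan_general r n
end

section
/- The number of r-Stirling permutations of size n equals the product over s from 1 to n-1 of (sr+1). -/
/-!
Removing the `r` copies of the largest letter from an `r`-Stirling permutation of size
`n + 1` leaves an `r`-Stirling permutation of size `n`. Conversely, anything standing between
two copies of the largest letter is at least as large, hence equal to it, so these copies form
one consecutive block. An `r`-Stirling permutation of size `n + 1` is therefore the same as an
`r`-Stirling permutation of size `n` together with one of its `r * n + 1` gaps in which to
insert the block, and the count is multiplied by `r * n + 1` at each step.
-/

open Finset

open scoped Classical in
/-- An `r`-Stirling permutation of size `n`, encoded as a word `w` of length `r*n`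
with letters in `Fin n` (the letter `v` standing for the integer `v+1`): every letter
occurs exactly `r` times, and every letter lying between two occurrences of a letter
`j` is at least `j` (i.e. if an integer `i` appears between two occurrences of `j`
then `i > j`, for `i ≠ j`). -/
def IsStirling (r n : ℕ) (w : Fin (r * n) → Fin n) : Prop :=
  (∀ v : Fin n, (univ.filter (fun i => w i = v)).card = r) ∧
  (∀ a b c : Fin (r * n), a < b → b < c → w a = w c → w a ≤ w b)

section InsertBlock

variable {α : Type*} {m : ℕ}

def StirlingCondition [LE α] (w : Fin m → α) : Prop :=
  ∀ a b c : Fin m, a < b → b < c → w a = w c → w a ≤ w b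

theorem stirlingCondition_comp_iff [Preorder α] {β : Type*} [Preorder β] (f : α ↪o β)
    (w : Fin m → α) : StirlingCondition (f ∘ w) ↔ StirlingCondition w := by
  simp only [StirlingCondition, Function.comp_apply, f.injective.eq_iff, f.le_iff_le]

theorem Fin.card_filter_le_val_lt (M a b : ℕ) (h : b ≤ M) :
    #{i : Fin M | a ≤ (i : ℕ) ∧ (i : ℕ) < b} = b - a := by
  rw [← card_map Fin.valEmbedding, ← Nat.card_Ico]
  congr 1
  ext k
  simp only [mem_map, mem_filter, mem_univ, true_and, Fin.valEmbedding_apply, mem_Ico]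
  constructor
  · rintro ⟨i, hi, rfl⟩
    exact hi
  · intro hk
    exact ⟨⟨k, by omega⟩, hk, rfl⟩

/-- The positions of a word of length `m` inside the word of length `m + r` obtained by
inserting a block of length `r` at position `p`. -/
def skipBlock (r : ℕ) (p : Fin (m + 1)) (j : Fin m) : Fin (m + r) :=
  ⟨if (j : ℕ) < p then j else j + r, by split <;> omega⟩

theorem skipBlock_strictMono (r : ℕ) (p : Fin (m + 1)) : StrictMono (skipBlock r p) := by
  intro a b hab
  simp only [skipBlock, Fin.mk_lt_mk]
  split_ifs <;> omega

theorem exists_skipBlock_eq_iff {r : ℕ} {p : Fin (m + 1)} {i : Fin (m + r)} :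
    (∃ j, skipBlock r p j = i) ↔ ¬ ((p : ℕ) ≤ i ∧ (i : ℕ) < p + r) := by
  constructor
  · rintro ⟨j, rfl⟩
    simp only [skipBlock]
    split_ifs <;> omega
  · intro hi
    by_cases hip : (i : ℕ) < p
    · exact ⟨⟨i, by omega⟩, Fin.ext (by simp [skipBlock, hip])⟩
    · exact ⟨⟨i - r, by omega⟩, Fin.ext (by simp only [skipBlock]; split_ifs <;> omega)⟩

def insertBlock (r : ℕ) (p : Fin (m + 1)) (x : α) (w : Fin m → α) (i : Fin (m + r)) : α :=
  if h : (i : ℕ) < p then w ⟨i, by omega⟩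
  else if h' : (i : ℕ) < p + r then x
  else w ⟨i - r, by omega⟩

variable {r : ℕ} {p : Fin (m + 1)} {x : α} {w : Fin m → α}

@[simp]
theorem insertBlock_skipBlock (j : Fin m) : insertBlock r p x w (skipBlock r p j) = w j := by
  by_cases hj : (j : ℕ) < p
  · simp [insertBlock, skipBlock, hj]
  · have h₁ : ¬ (j : ℕ) + r < p := by omega
    have h₂ : ¬ (j : ℕ) + r < p + r := by omega
    simp [insertBlock, skipBlock, hj, h₁, h₂]

theorem insertBlock_of_mem_block {i : Fin (m + r)} (h : (p : ℕ) ≤ i ∧ (i : ℕ) < p + r) :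
    insertBlock r p x w i = x := by
  simp [insertBlock, h.2, not_lt.mpr h.1]

theorem insertBlock_eq_self_iff (hx : x ∉ Set.range w) (i : Fin (m + r)) :
    insertBlock r p x w i = x ↔ (p : ℕ) ≤ i ∧ (i : ℕ) < p + r := by
  refine ⟨fun h => ?_, insertBlock_of_mem_block⟩
  by_contra hi
  obtain ⟨j, rfl⟩ := exists_skipBlock_eq_iff.mpr hi
  exact hx ⟨j, by simpa using h⟩

theorem card_insertBlock_eq_self [DecidableEq α] (hx : x ∉ Set.range w) :
    #{i | insertBlock r p x w i = x} = r := by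
  simp only [insertBlock_eq_self_iff hx]
  rw [Fin.card_filter_le_val_lt _ _ _ (by omega)]
  omega

theorem card_insertBlock_eq_of_ne [DecidableEq α] {y : α} (hy : y ≠ x) :
    #{i | insertBlock r p x w i = y} = #{j | w j = y} := by
  rw [← card_image_of_injective _ (skipBlock_strictMono r p).injective]
  congr 1
  ext i
  simp only [mem_filter, mem_univ, true_and, mem_image]
  constructor
  · intro hi
    have : ¬ ((p : ℕ) ≤ i ∧ (i : ℕ) < p + r) := fun h =>
      hy (hi.symm.trans (insertBlock_of_mem_block h))
    obtain ⟨j, rfl⟩ := exists_skipBlock_eq_iff.mpr this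
    exact ⟨j, by simpa using hi, rfl⟩
  · rintro ⟨j, hj, rfl⟩
    simpa using hj

theorem insertBlock_inj (hr : 0 < r) {p' : Fin (m + 1)} {w' : Fin m → α}
    (hx : x ∉ Set.range w) (hx' : x ∉ Set.range w') :
    insertBlock r p x w = insertBlock r p' x w' ↔ p = p' ∧ w = w' := by
  refine ⟨fun h => ?_, fun ⟨hp, hw⟩ => hp ▸ hw ▸ rfl⟩
  have hblock : ∀ i : Fin (m + r),
      (p : ℕ) ≤ i ∧ (i : ℕ) < p + r ↔ (p' : ℕ) ≤ i ∧ (i : ℕ) < p' + r := by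
    intro i
    rw [← insertBlock_eq_self_iff hx, ← insertBlock_eq_self_iff hx', h]
  have hp : p = p' := by
    have h₁ := hblock ⟨p, by omega⟩
    have h₂ := hblock ⟨p', by omega⟩
    simp only at h₁ h₂
    exact Fin.ext (by omega)
  subst hp
  exact ⟨rfl, funext fun j => by simpa using congrFun h (skipBlock r p j)⟩

theorem eq_insertBlock_of_block {w' : Fin (m + r) → α}
    (h : ∀ i, w' i = x ↔ (p : ℕ) ≤ i ∧ (i : ℕ) < p + r) :
    insertBlock r p x (w' ∘ skipBlock r p) = w' := by
  funext i
  by_cases hi : (p : ℕ) ≤ i ∧ (i : ℕ) < p + r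
  · rw [insertBlock_of_mem_block hi, (h i).mpr hi]
  · obtain ⟨j, rfl⟩ := exists_skipBlock_eq_iff.mpr hi
    simp

end InsertBlock

section StirlingCondition

variable {α : Type*} {m r : ℕ}

theorem stirlingCondition_insertBlock_iff [Preorder α] {p : Fin (m + 1)} {x : α}
    {w : Fin m → α} (hx : ∀ j, w j < x) :
    StirlingCondition (insertBlock r p x w) ↔ StirlingCondition w := by
  have hx' : x ∉ Set.range w := fun ⟨j, hj⟩ => (hx j).ne hj
  have hmono := skipBlock_strictMono r p
  constructor
  · intro h a b c hab hbc hac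
    simpa using h _ _ _ (hmono hab) (hmono hbc) (by simpa using hac)
  · intro hw a b c hab hbc hac
    have hle_x : ∀ i, insertBlock r p x w i ≤ x := by
      intro i
      by_cases hi : (p : ℕ) ≤ i ∧ (i : ℕ) < p + r
      · exact (insertBlock_of_mem_block hi).le
      · obtain ⟨j, rfl⟩ := exists_skipBlock_eq_iff.mpr hi
        simpa using (hx j).le
    by_cases hb : (p : ℕ) ≤ b ∧ (b : ℕ) < p + r
    · rw [insertBlock_of_mem_block hb]
      exact hle_x a
    -- `a` and `c` lie both in the block or both outside; as the block is an interval missing `b`,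
    -- they lie outside.
    have hac' : (p : ℕ) ≤ a ∧ (a : ℕ) < p + r ↔ (p : ℕ) ≤ c ∧ (c : ℕ) < p + r := by
      rw [← insertBlock_eq_self_iff hx' a, ← insertBlock_eq_self_iff hx' c, hac]
    have ha : ¬ ((p : ℕ) ≤ a ∧ (a : ℕ) < p + r) := by
      rw [Fin.lt_def] at hab hbc
      omega
    have hc : ¬ ((p : ℕ) ≤ c ∧ (c : ℕ) < p + r) := by
      rw [Fin.lt_def] at hab hbc
      omega
    obtain ⟨a, rfl⟩ := exists_skipBlock_eq_iff.mpr ha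
    obtain ⟨b, rfl⟩ := exists_skipBlock_eq_iff.mpr hb
    obtain ⟨c, rfl⟩ := exists_skipBlock_eq_iff.mpr hc
    simp only [insertBlock_skipBlock] at hac ⊢
    exact hw a b c (hmono.lt_iff_lt.mp hab) (hmono.lt_iff_lt.mp hbc) hac

theorem StirlingCondition.exists_block [PartialOrder α] [DecidableEq α] {M : ℕ} {w : Fin M → α}
    (hw : StirlingCondition w) {x : α} (hx : ∀ i, w i ≤ x) (hpos : 0 < #{i | w i = x}) :
    ∃ p : ℕ, p + #{i | w i = x} ≤ M ∧
      ∀ i, w i = x ↔ p ≤ (i : ℕ) ∧ (i : ℕ) < p + #{i | w i = x} := by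
  set S : Finset (Fin M) := {i | w i = x} with hS
  have hne : S.Nonempty := card_pos.mp hpos
  have hmem : ∀ i, i ∈ S ↔ w i = x := by simp [hS]
  set a := S.min' hne
  set b := S.max' hne
  have ha : w a = x := (hmem a).mp (S.min'_mem hne)
  have hb : w b = x := (hmem b).mp (S.max'_mem hne)
  have hIcc : S = Icc a b := by
    ext i
    rw [mem_Icc]
    refine ⟨fun hi => ⟨S.min'_le i hi, S.le_max' i hi⟩, fun ⟨h₁, h₂⟩ => (hmem i).mpr ?_⟩
    rcases h₁.lt_or_eq with h₁ | rfl
    · rcases h₂.lt_or_eq with h₂ | rfl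
      · exact le_antisymm (hx i) (ha ▸ hw a i b h₁ h₂ (ha.trans hb.symm))
      · exact hb
    · exact ha
  have hcard : #S = b + 1 - a := by rw [hIcc, Fin.card_Icc]
  refine ⟨a, by omega, fun i => ?_⟩
  rw [← hmem, hIcc, mem_Icc, Fin.le_def, Fin.le_def, Fin.card_Icc]
  omega

end StirlingCondition

section IsStirling

variable {r n : ℕ}

theorem isStirling_insertBlock_iff (p : Fin (r * n + 1)) (w : Fin (r * n) → Fin n) :
    IsStirling r (n + 1) (insertBlock r p (Fin.last n) (Fin.castSucc ∘ w)) ↔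
      IsStirling r n w := by
  have hlt : ∀ j, (Fin.castSucc ∘ w) j < Fin.last n := fun j => Fin.castSucc_lt_last _
  have hlast : Fin.last n ∉ Set.range (Fin.castSucc ∘ w) := fun ⟨j, hj⟩ => (hlt j).ne hj
  have hcount : (∀ v, #{i | insertBlock r p (Fin.last n) (Fin.castSucc ∘ w) i = v} = r) ↔
      ∀ v, #{j | w j = v} = r := by
    rw [Fin.forall_fin_succ', card_insertBlock_eq_self hlast]
    simp [card_insertBlock_eq_of_ne (Fin.castSucc_lt_last _).ne]
  exact and_congr hcount ((stirlingCondition_insertBlock_iff hlt).trans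
    (stirlingCondition_comp_iff Fin.castSuccOrderEmb w))

theorem IsStirling.exists_eq_insertBlock (hr : 0 < r) {w' : Fin (r * (n + 1)) → Fin (n + 1)}
    (hw' : IsStirling r (n + 1) w') :
    ∃ p : Fin (r * n + 1), ∃ w : Fin (r * n) → Fin n,
      IsStirling r n w ∧ insertBlock r p (Fin.last n) (Fin.castSucc ∘ w) = w' := by
  obtain ⟨p, hpM, hp⟩ := StirlingCondition.exists_block hw'.2 (x := Fin.last n)
    (fun i => Fin.le_last _) (by rw [hw'.1]; exact hr)
  rw [hw'.1] at hpM hp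
  let q : Fin (r * n + 1) := ⟨p, by rw [Nat.mul_succ] at hpM; omega⟩
  have hne : ∀ j, w' (skipBlock r q j) ≠ Fin.last n := fun j h =>
    exists_skipBlock_eq_iff.mp ⟨j, rfl⟩ (show (q : ℕ) ≤ _ ∧ _ from (hp _).mp h)
  let w : Fin (r * n) → Fin n := fun j => (w' (skipBlock r q j)).castPred (hne j)
  have hw : Fin.castSucc ∘ w = w' ∘ skipBlock r q := funext fun j => Fin.castSucc_castPred _ _
  have hins : insertBlock r q (Fin.last n) (Fin.castSucc ∘ w) = w' :=
    hw ▸ eq_insertBlock_of_block (m := r * n) (p := q) hp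
  exact ⟨q, w, (isStirling_insertBlock_iff q w).mp (hins ▸ hw'), hins⟩

open scoped Classical in
theorem card_isStirling_zero (r : ℕ) : #{w : Fin (r * 0) → Fin 0 | IsStirling r 0 w} = 1 := by
  rw [filter_true_of_mem fun w _ => ⟨fun v => v.elim0, fun a => a.elim0⟩]
  simp

open scoped Classical in
theorem card_isStirling_succ (hr : 0 < r) :
    #{w : Fin (r * (n + 1)) → Fin (n + 1) | IsStirling r (n + 1) w} =
      (r * n + 1) * #{w : Fin (r * n) → Fin n | IsStirling r n w} := by
  have hlast : ∀ w : Fin (r * n) → Fin n, Fin.last n ∉ Set.range (Fin.castSucc ∘ w) :=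
    fun w ⟨j, hj⟩ => (Fin.castSucc_lt_last (w j)).ne hj
  rw [← Fintype.card_fin (r * n + 1), ← card_univ, ← card_product]
  symm
  refine card_bij (fun pw _ => insertBlock r pw.1 (Fin.last n) (Fin.castSucc ∘ pw.2))
    (fun pw hpw => ?_) (fun pw _ pw' _ h => ?_) (fun w' hw' => ?_)
  · simp only [mem_product, mem_filter, mem_univ, true_and] at hpw ⊢
    exact (isStirling_insertBlock_iff pw.1 pw.2).mpr hpw
  · obtain ⟨hp, hw⟩ := (insertBlock_inj hr (hlast _) (hlast _)).mp h
    exact Prod.ext hp (Fin.castSucc_injective n |>.comp_left hw)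
  · obtain ⟨p, w, hw, rfl⟩ := (mem_filter.mp hw').2.exists_eq_insertBlock hr
    exact ⟨(p, w), by simpa using hw, rfl⟩

end IsStirling

open scoped Classical in
/-- The number of `r`-Stirling permutations of size `n` is `∏_{s=1}^{n-1} (s*r + 1)`. -/
theorem stirling_card (r n : ℕ) (hr : 1 ≤ r) :
    (univ.filter (fun w : Fin (r * n) → Fin n => IsStirling r n w)).card =
      ∏ s ∈ Finset.Icc 1 (n - 1), (s * r + 1) := by
  induction n with
  | zero => simpa using card_isStirling_zero r
  | succ n ih =>
    rw [card_isStirling_succ hr, ih]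
    cases n with
    | zero => simp
    | succ n =>
      simp only [Nat.add_sub_cancel]
      rw [prod_Icc_succ_top (by omega)]
      ring
end

section
/- The generating function ∑_{ω ∈ S_n(132)} q^{inv(ω)} over 132-avoiding permutations of [n] equals the Carlitz q-Catalan number C_n(q), where C_n(q) satisfies C_{n+1}(q) = ∑_{k=0}^{n} C_k(q) C_{n-k}(q) q^{(k+1)(n-k)} with C_0(q)=1. -/
open Finset Polynomial

/-- The Carlitz `q`-Catalan polynomials, defined by the recurrence
`C_{n+1}(q) = ∑_{k=0}^{n} C_k(q) C_{n-k}(q) q^{(k+1)(n-k)}`, `C_0 = 1`. -/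
noncomputable def carlitz : ℕ → Polynomial ℕ
  | 0 => 1
  | n + 1 =>
    ∑ k ∈ (Finset.range (n + 1)).attach,
      carlitz k.1 * carlitz (n - k.1) * X ^ ((k.1 + 1) * (n - k.1))
  decreasing_by
  · have := Finset.mem_range.mp k.2; omega
  · have := Finset.mem_range.mp k.2; omega

/-- The inversion number of a permutation: the number of pairs `i < j` with `σ i > σ j`. -/
def permInv {n : ℕ} (σ : Equiv.Perm (Fin n)) : ℕ :=
  (univ.filter (fun p : Fin n × Fin n => p.1 < p.2 ∧ σ p.2 < σ p.1)).card

/-- A permutation is 132-avoiding if there are no `i < j < k` with `σ i < σ k < σ j`. -/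
def PermAvoids132 {n : ℕ} (σ : Equiv.Perm (Fin n)) : Prop :=
  ¬ ∃ i j k : Fin n, i < j ∧ j < k ∧ σ i < σ k ∧ σ k < σ j

/-!
Split a 132-avoiding permutation of `[n + 1]` at the position `k` of its maximum `n`. Avoidance
forces every entry left of the maximum to exceed every entry right of it, so the left block is a
132-avoiding permutation of the top values `n - k, …, n - 1` and the right block one of the bottom
values `0, …, n - k - 1`; conversely any two such blocks glue to a 132-avoiding permutation.
Besides the inversions inside the blocks, each of the `k + 1` entries up to the maximum forms an
inversion with each of the `n - k` entries after it, which gives the factor `q^{(k+1)(n-k)}`.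
-/

open Equiv Function

theorem permInv_eq_sum {n : ℕ} (σ : Perm (Fin n)) :
    permInv σ = ∑ x, ∑ y, if x < y ∧ σ y < σ x then 1 else 0 := by
  rw [permInv, card_filter, Fintype.sum_prod_type]

theorem Equiv.Perm.exists_apply_comp_eq {α β : Type*} [Finite α] (σ : Perm β) {e g : α → β}
    (he : Injective e) (h : ∀ i, σ (e i) ∈ Set.range g) :
    ∃ a : Perm α, ∀ i, σ (e i) = g (a i) := by
  choose f hf using h
  have hf_inj : Injective f := fun i j hij => he (σ.injective (by rw [← hf i, ← hf j, hij]))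
  exact ⟨Equiv.ofBijective f (Finite.injective_iff_bijective.mp hf_inj), fun i => (hf i).symm⟩

theorem PermAvoids132.of_strictMono {k N : ℕ} {σ : Perm (Fin N)} {a : Perm (Fin k)}
    (hσ : PermAvoids132 σ) {e g : Fin k → Fin N} (he : StrictMono e) (hg : StrictMono g)
    (h : ∀ i, σ (e i) = g (a i)) : PermAvoids132 a := by
  rintro ⟨i, j, l, hij, hjl, hil, hlj⟩
  exact hσ ⟨e i, e j, e l, he hij, he hjl, by simpa only [h] using hg hil,
    by simpa only [h] using hg hlj⟩

theorem PermAvoids132.apply_lt_apply_of_lt_of_lt {N : ℕ} {σ : Perm (Fin N)}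
    (hσ : PermAvoids132 σ) {x y z : Fin N} (hy : ∀ w, σ w ≤ σ y) (hxy : x < y)
    (hyz : y < z) :
    σ z < σ x := by
  by_contra! hxz
  have hxz : σ x < σ z := hxz.lt_of_ne (σ.injective.ne (hxy.trans hyz).ne)
  exact hσ ⟨x, y, z, hxy, hyz, hxz, (hy z).lt_of_ne (σ.injective.ne hyz.ne')⟩

section Blocks

variable {k m : ℕ}

def leftPos : Fin k ↪o Fin (k + 1 + m) := Fin.castSuccOrderEmb.trans (Fin.castAddOrderEmb m)
def maxPos : Fin (k + 1 + m) := Fin.castAdd m (Fin.last k)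
def rightPos : Fin m ↪o Fin (k + 1 + m) := Fin.natAddOrderEmb (k + 1)
def leftVal : Fin k ↪o Fin (k + 1 + m) :=
  (Fin.natAddOrderEmb m).trans (Fin.castLEOrderEmb (by omega))
def maxVal : Fin (k + 1 + m) := ⟨k + m, by omega⟩
def rightVal : Fin m ↪o Fin (k + 1 + m) := Fin.castLEOrderEmb (by omega)

@[simp] theorem val_leftPos (i : Fin k) : (leftPos i : Fin (k + 1 + m)).val = i := by
  simp [leftPos]
@[simp] theorem val_maxPos : (maxPos : Fin (k + 1 + m)).val = k := by simp [maxPos]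
@[simp] theorem val_rightPos (j : Fin m) : (rightPos j : Fin (k + 1 + m)).val = k + 1 + j := by
  simp [rightPos]
@[simp] theorem val_leftVal (i : Fin k) : (leftVal i : Fin (k + 1 + m)).val = m + i := by
  simp [leftVal]
@[simp] theorem val_maxVal : (maxVal : Fin (k + 1 + m)).val = k + m := rfl
@[simp] theorem val_rightVal (j : Fin m) : (rightVal j : Fin (k + 1 + m)).val = j := by
  simp [rightVal]

@[simp] theorem leftPos_lt_maxPos (i : Fin k) : leftPos i < (maxPos : Fin (k + 1 + m)) := by
  simp [Fin.lt_def]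
@[simp] theorem leftPos_lt_rightPos (i : Fin k) (j : Fin m) : leftPos i < rightPos j := by
  simp [Fin.lt_def]; omega
@[simp] theorem maxPos_lt_rightPos (j : Fin m) : (maxPos : Fin (k + 1 + m)) < rightPos j := by
  simp [Fin.lt_def]; omega
@[simp] theorem leftVal_lt_maxVal (i : Fin k) : leftVal i < (maxVal : Fin (k + 1 + m)) := by
  simp [Fin.lt_def]; omega
@[simp] theorem rightVal_lt_leftVal (i : Fin k) (j : Fin m) : rightVal j < leftVal i := by
  simp [Fin.lt_def]; omega
@[simp] theorem rightVal_lt_maxVal (j : Fin m) : rightVal j < (maxVal : Fin (k + 1 + m)) := by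
  simp [Fin.lt_def]; omega

theorem eq_leftPos_or_eq_maxPos_or_eq_rightPos (x : Fin (k + 1 + m)) :
    (∃ i, x = leftPos i) ∨ x = maxPos ∨ ∃ j, x = rightPos j := by
  induction x using Fin.addCases with
  | left x => induction x using Fin.lastCases with
    | last => exact Or.inr (Or.inl rfl)
    | cast i => exact Or.inl ⟨i, rfl⟩
  | right j => exact Or.inr (Or.inr ⟨j, rfl⟩)

theorem sum_univ_leftPos_maxPos_rightPos {M : Type*} [AddCommMonoid M]
    (f : Fin (k + 1 + m) → M) :
    ∑ x, f x = ∑ i, f (leftPos i) + f maxPos + ∑ j, f (rightPos j) := by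
  rw [Fin.sum_univ_add, Fin.sum_univ_castSucc]; rfl

end Blocks

section Glue

variable {k m : ℕ} (a : Perm (Fin k)) (b : Perm (Fin m))

def glueFun : Fin (k + 1 + m) → Fin (k + 1 + m) :=
  Fin.addCases (Fin.lastCases maxVal fun i => leftVal (a i)) fun j => rightVal (b j)

theorem glueFun_injective : Injective (glueFun a b) := by
  intro x y h
  obtain ⟨i, rfl⟩ | rfl | ⟨j, rfl⟩ := eq_leftPos_or_eq_maxPos_or_eq_rightPos x <;>
  obtain ⟨i', rfl⟩ | rfl | ⟨j', rfl⟩ := eq_leftPos_or_eq_maxPos_or_eq_rightPos y <;>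
  simp [glueFun, leftPos, maxPos, rightPos, Fin.ext_iff] at h ⊢ <;> omega

/-- In the notation of pattern avoidance, `glue a b` is the skew sum `(a ⊕ 1) ⊖ b`. -/
noncomputable def glue : Perm (Fin (k + 1 + m)) :=
  Equiv.ofBijective _ (Finite.injective_iff_bijective.mp (glueFun_injective a b))

@[simp] theorem glue_leftPos (i : Fin k) : glue a b (leftPos i) = leftVal (a i) := by
  simp [glue, glueFun, leftPos]
@[simp] theorem glue_maxPos : glue a b maxPos = maxVal := by simp [glue, glueFun, maxPos]
@[simp] theorem glue_rightPos (j : Fin m) : glue a b (rightPos j) = rightVal (b j) := by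
  simp [glue, glueFun, rightPos]

theorem glue_injective : Injective2 (glue : Perm (Fin k) → Perm (Fin m) → _) := by
  intro a a' b b' h
  exact ⟨Equiv.ext fun i => by simpa using DFunLike.congr_fun h (leftPos i),
    Equiv.ext fun j => by simpa using DFunLike.congr_fun h (rightPos j)⟩

theorem permInv_glue : permInv (glue a b) = permInv a + permInv b + (k + 1) * m := by
  simp only [permInv_eq_sum, sum_univ_leftPos_maxPos_rightPos, sum_add_distrib, glue_leftPos,
    glue_maxPos, glue_rightPos, OrderEmbedding.lt_iff_lt, leftPos_lt_maxPos, leftPos_lt_rightPos,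
    maxPos_lt_rightPos, leftVal_lt_maxVal, rightVal_lt_leftVal, rightVal_lt_maxVal,
    lt_self_iff_false, not_lt_of_gt, and_false, and_true, if_true, if_false, sum_const_zero,
    sum_const, card_univ, Fintype.card_fin, smul_eq_mul, mul_one]
  ring

variable {a b} in
theorem permAvoids132_glue (ha : PermAvoids132 a) (hb : PermAvoids132 b) :
    PermAvoids132 (glue a b) := by
  rintro ⟨x, y, z, hxy, hyz, hxz, hzy⟩
  obtain ⟨x, rfl⟩ | rfl | ⟨x, rfl⟩ := eq_leftPos_or_eq_maxPos_or_eq_rightPos x <;>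
  obtain ⟨y, rfl⟩ | rfl | ⟨y, rfl⟩ := eq_leftPos_or_eq_maxPos_or_eq_rightPos y <;>
  obtain ⟨z, rfl⟩ | rfl | ⟨z, rfl⟩ := eq_leftPos_or_eq_maxPos_or_eq_rightPos z <;>
  simp only [glue_leftPos, glue_maxPos, glue_rightPos, OrderEmbedding.lt_iff_lt, leftPos_lt_maxPos,
    leftPos_lt_rightPos, maxPos_lt_rightPos, leftVal_lt_maxVal, rightVal_lt_leftVal,
    rightVal_lt_maxVal, lt_self_iff_false, not_lt_of_gt] at hxy hyz hxz hzy
  exacts [ha ⟨x, y, z, hxy, hyz, hxz, hzy⟩, hb ⟨x, y, z, hxy, hyz, hxz, hzy⟩]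

end Glue

section Decompose

variable {k m : ℕ} {σ : Perm (Fin (k + 1 + m))}

theorem apply_le_maxVal (x : Fin (k + 1 + m)) : σ x ≤ maxVal := by
  rw [Fin.le_def, val_maxVal]; omega

theorem apply_lt_maxVal_of_ne (hmax : σ maxPos = maxVal) {x : Fin (k + 1 + m)}
    (hx : x ≠ maxPos) :
    σ x < maxVal :=
  (apply_le_maxVal x).lt_of_ne (hmax ▸ σ.injective.ne hx)

theorem PermAvoids132.apply_leftPos_mem_range (hσ : PermAvoids132 σ) (hmax : σ maxPos = maxVal)
    (i : Fin k) : σ (leftPos i) ∈ Set.range leftVal := by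
  have hright : ∀ j, σ (rightPos j) < σ (leftPos i) := fun j =>
    hσ.apply_lt_apply_of_lt_of_lt (hmax ▸ apply_le_maxVal) (leftPos_lt_maxPos i)
      (maxPos_lt_rightPos j)
  have hge : m ≤ (σ (leftPos i) : ℕ) := by
    simpa using card_le_card_of_injOn (s := univ) (t := Iio (σ (leftPos i))) (σ ∘ rightPos)
      (fun j _ => by simpa using hright j) (σ.injective.comp rightPos.injective).injOn
  have hlt : σ (leftPos i) < maxVal := apply_lt_maxVal_of_ne hmax (leftPos_lt_maxPos i).ne
  rw [Fin.lt_def, val_maxVal] at hlt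
  exact ⟨⟨σ (leftPos i) - m, by omega⟩, Fin.ext (by simp; omega)⟩

theorem PermAvoids132.apply_rightPos_mem_range (hσ : PermAvoids132 σ) (hmax : σ maxPos = maxVal)
    (j : Fin m) : σ (rightPos j) ∈ Set.range rightVal := by
  have hleft : ∀ i, σ (rightPos j) < σ (leftPos i) := fun i =>
    hσ.apply_lt_apply_of_lt_of_lt (hmax ▸ apply_le_maxVal) (leftPos_lt_maxPos i)
      (maxPos_lt_rightPos j)
  have hle : k ≤ k + m - σ (rightPos j) - 1 := by
    simpa [Fin.card_Ioo] using card_le_card_of_injOn (s := univ)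
      (t := Ioo (σ (rightPos j)) maxVal) (σ ∘ leftPos)
      (fun i _ => by simpa using ⟨hleft i, apply_lt_maxVal_of_ne hmax (leftPos_lt_maxPos i).ne⟩)
      (σ.injective.comp leftPos.injective).injOn
  have hlt : σ (rightPos j) < maxVal := apply_lt_maxVal_of_ne hmax (maxPos_lt_rightPos j).ne'
  rw [Fin.lt_def, val_maxVal] at hlt
  exact ⟨⟨σ (rightPos j), by omega⟩, Fin.ext (by simp)⟩

theorem PermAvoids132.exists_glue (hσ : PermAvoids132 σ) (hmax : σ maxPos = maxVal) :
    ∃ a b, PermAvoids132 a ∧ PermAvoids132 b ∧ glue a b = σ := by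
  obtain ⟨a, ha⟩ := σ.exists_apply_comp_eq leftPos.injective (hσ.apply_leftPos_mem_range hmax)
  obtain ⟨b, hb⟩ :=
    σ.exists_apply_comp_eq rightPos.injective (hσ.apply_rightPos_mem_range hmax)
  refine ⟨a, b, hσ.of_strictMono leftPos.strictMono leftVal.strictMono ha,
    hσ.of_strictMono rightPos.strictMono rightVal.strictMono hb, Equiv.ext fun x => ?_⟩
  obtain ⟨i, rfl⟩ | rfl | ⟨j, rfl⟩ := eq_leftPos_or_eq_maxPos_or_eq_rightPos x <;>
    simp [ha, hb, hmax]

end Decompose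

open scoped Classical in
theorem sum_pow_permInv_avoiding_symm_eq {R : Type*} [CommSemiring R] (x : R) {N k m : ℕ}
    (hN : k + 1 + m = N) (v : Fin N) (hv : (v : ℕ) = k + m) :
    ∑ σ ∈ {σ ∈ univ.filter (fun σ : Perm (Fin N) => PermAvoids132 σ) |
        (σ.symm v : ℕ) = k},
        x ^ permInv σ =
      (∑ a ∈ univ.filter (fun a : Perm (Fin k) => PermAvoids132 a), x ^ permInv a) *
      (∑ b ∈ univ.filter (fun b : Perm (Fin m) => PermAvoids132 b), x ^ permInv b) *
      x ^ ((k + 1) * m) := by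
  subst hN
  obtain rfl : v = maxVal := Fin.ext hv
  have hfiber (σ : Perm (Fin (k + 1 + m))) :
      (σ.symm maxVal : ℕ) = k ↔ σ maxPos = maxVal := by
    rw [eq_comm (a := σ maxPos), ← symm_apply_eq, Fin.ext_iff, val_maxPos]
  rw [sum_mul_sum]
  simp only [sum_mul, hfiber]
  rw [← sum_product']
  symm
  refine sum_nbij (fun p => glue p.1 p.2) ?_ ?_ ?_ ?_
  · simp only [mem_product, mem_filter, mem_univ, true_and]
    exact fun p ⟨ha, hb⟩ => ⟨permAvoids132_glue ha hb, glue_maxPos _ _⟩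
  · exact fun p _ q _ h => Prod.ext_iff.mpr (glue_injective h)
  · intro σ hσ
    simp only [mem_coe, mem_filter, mem_univ, true_and] at hσ
    obtain ⟨a, b, ha, hb, rfl⟩ := hσ.1.exists_glue hσ.2
    exact ⟨(a, b), by simp [ha, hb], rfl⟩
  · intro p _
    rw [permInv_glue, pow_add, pow_add]

open scoped Classical in
/-- The inversion generating function over 132-avoiding permutations of `[n]`
is the Carlitz `q`-Catalan number `C_n(q)`. -/
theorem inv_gen_avoiding132_eq_carlitz (n : ℕ) :
    (∑ σ ∈ univ.filter (fun σ : Equiv.Perm (Fin n) => PermAvoids132 σ),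
      (X : Polynomial ℕ) ^ permInv σ) = carlitz n := by
  induction n using Nat.strong_induction_on with
  | _ n ih =>
  cases n with
  | zero => simp [carlitz, permInv, PermAvoids132]
  | succ n =>
    rw [carlitz, sum_attach (range (n + 1))
      (fun k => carlitz k * carlitz (n - k) * X ^ ((k + 1) * (n - k))),
      ← sum_fiberwise_of_maps_to (t := range (n + 1))
        (g := fun σ : Perm (Fin (n + 1)) => (σ.symm (Fin.last n) : ℕ))
        (fun σ _ => mem_range.mpr (σ.symm (Fin.last n)).isLt)]
    refine sum_congr rfl fun k hk => ?_
    have hk : k ≤ n := Nat.lt_succ_iff.mp (mem_range.mp hk)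
    rw [sum_pow_permInv_avoiding_symm_eq X (m := n - k) (by omega) (Fin.last n) (by simp; omega),
      ih k (by omega), ih (n - k) (by omega)]
end

section
/- The sum of q^{Area(d)} over all Dyck paths d of size n equals the Carlitz q-Catalan number C_n(q), where Area(d) is the number of unit boxes between d and the top path 0^n 1^n. -/
open Finset Polynomial

open scoped Classical in
/-- A Dyck path of size `n`: a word of length `2n` with `n` up steps (`false` = `0`)
and `n` right steps (`true` = `1`) such that every prefix has at least as many `0`'s
as `1`'s. -/
def IsDyck (n : ℕ) (w : Fin (2 * n) → Bool) : Prop :=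
  (univ.filter (fun i => w i = false)).card = n ∧
  ∀ k : ℕ,
    (univ.filter (fun i : Fin (2 * n) => (i : ℕ) < k ∧ w i = true)).card ≤
      (univ.filter (fun i : Fin (2 * n) => (i : ℕ) < k ∧ w i = false)).card

open scoped Classical in
/-- The area between a Dyck path `w` and the top path `0^n 1^n`: the number of unit
boxes above `w` and below `0^n1^n`, which equals the number of pairs of positions
`i < j` with `w i = 1` and `w j = 0`. -/
def dyckArea {m : ℕ} (w : Fin m → Bool) : ℕ :=
  (univ.filter (fun p : Fin m × Fin m => p.1 < p.2 ∧ w p.1 = true ∧ w p.2 = false)).card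

/-!
Every nonempty Dyck word factors uniquely as `U p D q` with Dyck words `p`, `q` (its first
return; equivalently, `DyckWord.ofTree` is a bijection from binary trees). The area of
`U p D q`, counted as the pairs "a `D` before a `U`", is the area of `p` plus the area of `q` plus
one pair for each of the `k + 1` `D`s of `U p D` and each of the `n - k` `U`s of `q`, where `p`
has semilength `k` and `U p D q` semilength `n + 1`. Summing
`q ^ area` over this factorization gives exactly Carlitz's recurrence.
-/

open DyckStep

def downUpPairs : List DyckStep → ℕ
  | [] => 0
  | s :: l => (if s = D then l.count U else 0) + downUpPairs l

lemma downUpPairs_append (l l' : List DyckStep) :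
    downUpPairs (l ++ l') = downUpPairs l + l.count D * l'.count U + downUpPairs l' := by
  induction l with
  | nil => simp [downUpPairs]
  | cons s l ih =>
    cases s <;> simp [downUpPairs, ih]
    ring

namespace DyckWord

def area (p : DyckWord) : ℕ := downUpPairs p.toList

lemma area_nest_add (p q : DyckWord) :
    (p.nest + q).area = p.area + q.area + (p.semilength + 1) * q.semilength := by
  change downUpPairs ([U] ++ p.toList ++ [D] ++ q.toList) = _
  rw [downUpPairs_append, downUpPairs_append, downUpPairs_append,
    semilength_eq_count_D (p := p), semilength]
  simp [downUpPairs, area]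
  ring

end DyckWord

open BinaryTree DyckWord

lemma carlitz_succ (n : ℕ) :
    carlitz (n + 1) =
      ∑ ij ∈ antidiagonal n, carlitz ij.1 * carlitz ij.2 * X ^ ((ij.1 + 1) * ij.2) := by
  rw [carlitz, Finset.sum_attach (range (n + 1))
    (fun k => carlitz k * carlitz (n - k) * X ^ ((k + 1) * (n - k))),
    Nat.sum_antidiagonal_eq_sum_range_succ_mk]

lemma semilength_ofTree (t : BinaryTree Unit) : (ofTree t).semilength = t.numNodes := by
  rw [← numNodes_toTree, toTree_ofTree]

lemma sum_X_pow_area_ofTree_eq_carlitz (n : ℕ) :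
    ∑ t ∈ treesOfNumNodesEq n, (X : ℕ[X]) ^ (ofTree t).area = carlitz n := by
  induction n using Nat.strong_induction_on with
  | _ n ih =>
  cases n with
  | zero => simp [ofTree, area, downUpPairs, carlitz]
  | succ n =>
  rw [treesOfNumNodesEq_succ, sum_biUnion, carlitz_succ]
  · refine sum_congr rfl fun ⟨i, j⟩ hij => ?_
    rw [HasAntidiagonal.mem_antidiagonal] at hij
    rw [sum_map, sum_product, ← ih i (by omega), ← ih j (by omega), sum_mul_sum, sum_mul]
    refine sum_congr rfl fun l hl => ?_
    rw [sum_mul]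
    refine sum_congr rfl fun r hr => ?_
    rw [mem_treesOfNumNodesEq] at hl hr
    change X ^ (ofTree (node () l r)).area = _
    rw [ofTree, area_nest_add, semilength_ofTree, semilength_ofTree, hl, hr, pow_add, pow_add]
  · simp_rw [Set.PairwiseDisjoint, Set.Pairwise, disjoint_left]
    aesop

theorem sum_X_pow_area_dyckWord_semilength_eq_carlitz (n : ℕ) :
    ∑ p : {p : DyckWord // p.semilength = n}, (X : ℕ[X]) ^ p.1.area = carlitz n := by
  rw [← sum_X_pow_area_ofTree_eq_carlitz, ← sum_coe_sort (treesOfNumNodesEq n)]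
  exact Fintype.sum_equiv (equivTreesOfNumNodesEq n) _ _ fun p => by simp [ofTree_toTree]

def DyckStep.ofBool : Bool → DyckStep
  | false => U
  | true => D

lemma DyckStep.ofBool_injective : Function.Injective DyckStep.ofBool := by
  decide

lemma DyckStep.ofBool_decide_eq_D (s : DyckStep) : ofBool (decide (s = D)) = s := by
  cases s <;> rfl

lemma List.count_U_add_count_D (l : List DyckStep) : l.count U + l.count D = l.length := by
  induction l with
  | nil => rfl
  | cons s l ih => cases s <;> simp <;> omega

lemma List.count_take_ofFn {α : Type*} [DecidableEq α] {m : ℕ} (f : Fin m → α) (k : ℕ) (a : α) :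
    ((List.ofFn f).take k).count a = #{i : Fin m | (i : ℕ) < k ∧ f i = a} := by
  induction m generalizing k with
  | zero => simp
  | succ m ih =>
    cases k with
    | zero => simp
    | succ k =>
      rw [List.ofFn_succ, List.take_succ_cons, List.count_cons, ih, card_filter, card_filter,
        Fin.sum_univ_succ]
      simp only [Fin.val_zero, Fin.val_succ, Nat.zero_lt_succ, true_and,
        Nat.add_lt_add_iff_right, beq_iff_eq]
      omega

lemma List.count_ofFn {α : Type*} [DecidableEq α] {m : ℕ} (f : Fin m → α) (a : α) :
    (List.ofFn f).count a = #{i : Fin m | f i = a} := by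
  simpa [List.take_of_length_le] using List.count_take_ofFn f m a

def pathWord {m : ℕ} (w : Fin m → Bool) : List DyckStep := List.ofFn fun i => ofBool (w i)

lemma pathWord_injective {m : ℕ} : Function.Injective (pathWord (m := m)) :=
  fun _ _ h => funext fun i => ofBool_injective (congrFun (List.ofFn_injective h) i)

lemma count_take_pathWord {m : ℕ} (w : Fin m → Bool) (k : ℕ) (b : Bool) :
    ((pathWord w).take k).count (ofBool b) = #{i : Fin m | (i : ℕ) < k ∧ w i = b} := by
  simp [pathWord, List.count_take_ofFn, ofBool_injective.eq_iff]

lemma count_pathWord {m : ℕ} (w : Fin m → Bool) (b : Bool) :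
    (pathWord w).count (ofBool b) = #{i : Fin m | w i = b} := by
  simp [pathWord, List.count_ofFn, ofBool_injective.eq_iff]

lemma isDyck_iff_exists_toList_eq {n : ℕ} {w : Fin (2 * n) → Bool} :
    IsDyck n w ↔ ∃ p : DyckWord, p.toList = pathWord w := by
  have hlen : (pathWord w).length = 2 * n := List.length_ofFn
  have hUD := List.count_U_add_count_D (pathWord w)
  constructor
  · rintro ⟨hU, hprefix⟩
    have hU' : (pathWord w).count U = n := (count_pathWord w false).trans hU
    refine ⟨⟨pathWord w, by omega, fun k => (count_take_pathWord w k true).trans_le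
      ((hprefix k).trans (count_take_pathWord w k false).symm.le)⟩, rfl⟩
  · rintro ⟨p, hp⟩
    have hsemi := p.two_mul_semilength_eq_length
    rw [hp, hlen] at hsemi
    refine ⟨?_, fun k => ?_⟩
    · rw [← count_pathWord, ← hp]
      change p.semilength = n
      omega
    · rw [← count_take_pathWord, ← count_take_pathWord, ← hp]
      exact p.count_D_le_count_U k

lemma pathWord_toList_getD {n : ℕ} (p : DyckWord) (hp : p.semilength = n) :
    pathWord (fun i : Fin (2 * n) => decide (p.toList.getD i U = D)) = p.toList := by
  have hlen : p.toList.length = 2 * n := by rw [← p.two_mul_semilength_eq_length, hp]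
  refine List.ext_getElem (by simp [pathWord, hlen]) fun i _ hi => ?_
  simp [pathWord, ofBool_decide_eq_D, List.getElem?_eq_getElem hi]

lemma dyckArea_succ {m : ℕ} (w : Fin (m + 1) → Bool) :
    dyckArea w = (if w 0 = true then #{j : Fin m | w j.succ = false} else 0)
      + dyckArea (fun i : Fin m => w i.succ) := by
  rw [dyckArea, dyckArea, card_filter, card_filter, ← univ_product_univ, sum_product,
    Fin.sum_univ_succ]
  congr 1
  · rw [Fin.sum_univ_succ]
    cases h0 : w 0 <;> simp [h0, Fin.succ_pos]
  · conv_rhs => rw [card_filter, ← univ_product_univ, sum_product]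
    refine sum_congr rfl fun i _ => ?_
    rw [Fin.sum_univ_succ]
    simp [Fin.succ_lt_succ_iff]

lemma downUpPairs_pathWord {m : ℕ} (w : Fin m → Bool) : downUpPairs (pathWord w) = dyckArea w := by
  induction m with
  | zero => simp [pathWord, downUpPairs, dyckArea]
  | succ m ih =>
    rw [dyckArea_succ, ← ih, ← count_pathWord]
    cases h0 : w 0 <;> simp [pathWord, List.ofFn_succ, downUpPairs, ofBool, h0]

open scoped Classical in
lemma sum_isDyck_eq_sum_dyckWord {M : Type*} [AddCommMonoid M] (n : ℕ) (f : List DyckStep → M) :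
    ∑ w ∈ univ.filter (fun w : Fin (2 * n) → Bool => IsDyck n w), f (pathWord w) =
      ∑ p : {p : DyckWord // p.semilength = n}, f p.1.toList := by
  symm
  refine sum_nbij (fun p i => decide (p.1.toList.getD i U = D)) (fun p _ => ?_)
    (fun p _ q _ h => ?_) (fun w hw => ?_) (fun p _ => ?_)
  · exact mem_filter.mpr
      ⟨mem_univ _, isDyck_iff_exists_toList_eq.mpr ⟨p, (pathWord_toList_getD p.1 p.2).symm⟩⟩
  · refine Subtype.ext (DyckWord.ext ?_)
    rw [← pathWord_toList_getD p.1 p.2, ← pathWord_toList_getD q.1 q.2]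
    exact congrArg pathWord h
  · obtain ⟨p, hp⟩ := isDyck_iff_exists_toList_eq.mp (mem_filter.mp hw).2
    have hsemi : p.semilength = n := by
      have := p.two_mul_semilength_eq_length
      rw [hp, pathWord, List.length_ofFn] at this
      omega
    refine ⟨⟨p, hsemi⟩, mem_coe.mpr (mem_univ _), pathWord_injective ?_⟩
    rw [pathWord_toList_getD p hsemi, hp]
  · rw [pathWord_toList_getD p.1 p.2]

open scoped Classical in
/-- The area generating function over Dyck paths of size `n` is the Carlitz
`q`-Catalan number `C_n(q)`. -/
theorem area_gen_dyck_eq_carlitz (n : ℕ) :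
    (∑ w ∈ univ.filter (fun w : Fin (2 * n) → Bool => IsDyck n w),
      (X : Polynomial ℕ) ^ dyckArea w) = carlitz n := by
  simp_rw [← downUpPairs_pathWord]
  rw [sum_isDyck_eq_sum_dyckWord n fun l => X ^ downUpPairs l]
  exact sum_X_pow_area_dyckWord_semilength_eq_carlitz n
end

section
/- The sum of q^{maj(d)} over all Dyck paths d of size n (viewed as 0-1 words of length 2n) equals the q-Catalan number (1/[n+1]) * qbinom(2n, n). -/
open Finset Polynomial

/-- The letter of the word `w` at the 0-based position `i` (junk `false` out of range). -/
def wd {m : ℕ} (w : Fin m → Bool) (i : ℕ) : Bool :=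
  if h : i < m then w ⟨i, h⟩ else false

/-- The major index of a 0-1 word: the sum of the (1-based) positions `i` with
`d_i = 1` and `d_{i+1} = 0`. -/
def wordMaj {m : ℕ} (w : Fin m → Bool) : ℕ :=
  ∑ i ∈ (Finset.range (m - 1)).filter (fun i => wd w i = true ∧ wd w (i + 1) = false), (i + 1)

/-- The `q`-integer `[m] = 1 + q + ⋯ + q^{m-1}`. -/
noncomputable def qInt (m : ℕ) : Polynomial ℕ := ∑ i ∈ Finset.range m, X ^ i

/-- The Gaussian binomial coefficient, via the `q`-Pascal recurrence. -/
noncomputable def qBinom : ℕ → ℕ → Polynomial ℕ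
  | _, 0 => 1
  | 0, _ + 1 => 0
  | n + 1, k + 1 => qBinom n k + X ^ (k + 1) * qBinom n (k + 1)

/-!
A ballot word (a prefix of a Dyck path) is split according to its last letter. Appending a
letter to a word of length `m` changes `maj` only when a `1` is followed by the new `0`, and then
by `m`. Hence the maj-generating functions `S m b` of ballot words with `b` ones and `T m b` of
those ending in `1` satisfy `T (m+1) (b+1) = S m b` and
`S (m+1) b = S m b + (q^m - 1) T m b + T (m+1) b`, and by induction `S m b` is the q-ballot
number `qbinom(m, b) - q qbinom(m, b-1)` for `2b ≤ m`. At `m = 2n`, `b = n` the absorption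
identity `[n+1] qbinom(2n, n-1) = [n] qbinom(2n, n)` turns this into the q-Catalan number.
The q-binomial identities are proved over `ℤ[X]` from
`qbinom(k+j, k) (q;q)_k (q;q)_j = (q;q)_{k+j}`, and pulled back to `ℕ[X]` at the end.
-/
noncomputable def qBinomZ (n k : ℕ) : ℤ[X] := (qBinom n k).map (Nat.castRingHom ℤ)

@[simp] lemma qBinomZ_zero_right (n : ℕ) : qBinomZ n 0 = 1 := by
  cases n <;> simp [qBinomZ, qBinom]

@[simp] lemma qBinomZ_zero_succ (k : ℕ) : qBinomZ 0 (k + 1) = 0 := by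
  simp [qBinomZ, qBinom]

lemma qBinomZ_succ_succ (n k : ℕ) :
    qBinomZ (n + 1) (k + 1) = qBinomZ n k + X ^ (k + 1) * qBinomZ n (k + 1) := by
  simp [qBinomZ, qBinom]

lemma qBinomZ_eq_zero_of_lt {n k : ℕ} (h : n < k) : qBinomZ n k = 0 := by
  induction n generalizing k with
  | zero => obtain ⟨k, rfl⟩ := Nat.exists_eq_add_one.mpr h; simp
  | succ n ih =>
    obtain ⟨k, rfl⟩ := Nat.exists_eq_add_one.mpr (Nat.zero_lt_of_lt h)
    rw [qBinomZ_succ_succ, ih (by omega), ih (by omega)]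
    ring

@[simp] lemma qBinomZ_self (n : ℕ) : qBinomZ n n = 1 := by
  induction n with
  | zero => simp
  | succ n ih => simp [qBinomZ_succ_succ, ih, qBinomZ_eq_zero_of_lt]

noncomputable def qPochhammer (n : ℕ) : ℤ[X] := ∏ i ∈ range n, (1 - X ^ (i + 1))

lemma qPochhammer_succ (n : ℕ) : qPochhammer (n + 1) = qPochhammer n * (1 - X ^ (n + 1)) :=
  prod_range_succ _ _

lemma qPochhammer_ne_zero (n : ℕ) : qPochhammer n ≠ 0 :=
  prod_ne_zero_iff.mpr fun i _ => sub_ne_zero.mpr (by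
    intro h
    simpa using congrArg natDegree h)

theorem qBinomZ_add_mul_qPochhammer_mul_qPochhammer (k j : ℕ) :
    qBinomZ (k + j) k * qPochhammer k * qPochhammer j = qPochhammer (k + j) := by
  induction k generalizing j with
  | zero => simp [qPochhammer]
  | succ k ihk =>
    induction j with
    | zero => simp [qPochhammer]
    | succ j ihj =>
      have hk := ihk (j + 1)
      rw [qPochhammer_succ j] at hk
      rw [show k + 1 + j = k + (j + 1) by omega, qPochhammer_succ k] at ihj
      rw [show k + 1 + (j + 1) = k + (j + 1) + 1 by omega, qBinomZ_succ_succ,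
        qPochhammer_succ (k + (j + 1)), qPochhammer_succ k, qPochhammer_succ j]
      linear_combination (1 - X ^ (k + 1)) * hk + X ^ (k + 1) * (1 - X ^ (j + 1)) * ihj

lemma qBinomZ_symm_add (k j : ℕ) : qBinomZ (k + j) k = qBinomZ (k + j) j := by
  apply mul_right_cancel₀ (mul_ne_zero (qPochhammer_ne_zero k) (qPochhammer_ne_zero j))
  have hkj := qBinomZ_add_mul_qPochhammer_mul_qPochhammer k j
  have hjk := qBinomZ_add_mul_qPochhammer_mul_qPochhammer j k
  rw [add_comm j k] at hjk
  linear_combination hkj - hjk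

lemma one_sub_X_pow_mul_qBinomZ_succ_succ (n k : ℕ) :
    (1 - X ^ (k + 1)) * qBinomZ (n + 1) (k + 1) = (1 - X ^ (n + 1)) * qBinomZ n k := by
  rcases lt_or_ge n k with h | h
  · rw [qBinomZ_eq_zero_of_lt h, qBinomZ_eq_zero_of_lt (by omega), mul_zero, mul_zero]
  obtain ⟨j, rfl⟩ := Nat.exists_eq_add_of_le h
  apply mul_right_cancel₀ (mul_ne_zero (qPochhammer_ne_zero k) (qPochhammer_ne_zero j))
  have hsucc := qBinomZ_add_mul_qPochhammer_mul_qPochhammer (k + 1) j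
  rw [show k + 1 + j = k + j + 1 by omega, qPochhammer_succ k, qPochhammer_succ (k + j)] at hsucc
  linear_combination hsucc - (1 - X ^ (k + j + 1)) * qBinomZ_add_mul_qPochhammer_mul_qPochhammer k j

noncomputable def qBallot (m : ℕ) : ℕ → ℤ[X]
  | 0 => 1
  | b + 1 => qBinomZ m (b + 1) - X * qBinomZ m b

lemma qBallot_add_two (m b : ℕ) :
    qBallot (m + 2) (b + 1) =
      qBallot (m + 1) (b + 1) + qBallot (m + 1) b + (X ^ (m + 1) - 1) * qBallot m b := by
  cases b with
  | zero =>
    have hpascal := qBinomZ_succ_succ (m + 1) 0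
    have habsorb := one_sub_X_pow_mul_qBinomZ_succ_succ m 0
    simp only [qBallot, zero_add, qBinomZ_zero_right] at hpascal habsorb ⊢
    linear_combination hpascal - habsorb
  | succ c =>
    simp only [qBallot]
    linear_combination qBinomZ_succ_succ (m + 1) (c + 1) - X * qBinomZ_succ_succ (m + 1) c
      - one_sub_X_pow_mul_qBinomZ_succ_succ m (c + 1)
      + X * one_sub_X_pow_mul_qBinomZ_succ_succ m c

lemma qBallot_two_mul_add_two (c : ℕ) : qBallot (2 * c + 2) (c + 1) = qBallot (2 * c + 1) c := by
  cases c with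
  | zero => simp [qBallot, qBinomZ_succ_succ]
  | succ d =>
    show qBinomZ (2 * d + 3 + 1) (d + 1 + 1) - X * qBinomZ (2 * d + 3 + 1) (d + 1) =
      qBinomZ (2 * d + 3) (d + 1) - X * qBinomZ (2 * d + 3) d
    have hsymm := qBinomZ_symm_add (d + 2) (d + 1)
    rw [show d + 2 + (d + 1) = 2 * d + 3 by ring] at hsymm
    linear_combination qBinomZ_succ_succ (2 * d + 3) (d + 1) - X * qBinomZ_succ_succ (2 * d + 3) d
      + X ^ (d + 2) * hsymm

lemma geom_sum_mul_qBallot_two_mul_self (n : ℕ) :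
    (∑ i ∈ range (n + 1), (X : ℤ[X]) ^ i) * qBallot (2 * n) n = qBinomZ (2 * n) n := by
  have hX : (1 - X : ℤ[X]) ≠ 0 := fun h => by simpa using congrArg (eval 0) h
  apply mul_left_cancel₀ hX
  rw [← mul_assoc, mul_neg_geom_sum]
  cases n with
  | zero => simp [qBallot]
  | succ c =>
    show (1 - X ^ (c + 2)) * (qBinomZ (2 * c + 1 + 1) (c + 1) - X * qBinomZ (2 * c + 2) c) =
      (1 - X) * qBinomZ (2 * c + 1 + 1) (c + 1)
    have hsymm := qBinomZ_symm_add c (c + 2)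
    have hsymm' := qBinomZ_symm_add (c + 1) c
    rw [show c + (c + 2) = 2 * c + 2 by ring] at hsymm
    rw [show c + 1 + c = 2 * c + 1 by ring] at hsymm'
    linear_combination X * one_sub_X_pow_mul_qBinomZ_succ_succ (2 * c + 1) c
      - X * (1 - X ^ (c + 2)) * hsymm
      - X * one_sub_X_pow_mul_qBinomZ_succ_succ (2 * c + 1) (c + 1)
      - X * (1 - X ^ (2 * c + 2)) * hsymm'

section Words

variable {m : ℕ}

def prefixCount (w : Fin m → Bool) (c : Bool) (k : ℕ) : ℕ :=
  (univ.filter (fun i : Fin m => (i : ℕ) < k ∧ w i = c)).card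

def IsBallot (w : Fin m → Bool) : Prop :=
  ∀ k, prefixCount w true k ≤ prefixCount w false k

/-- The empty word counts as ending in `false`, the junk value of `wd`. -/
def lastLetter (w : Fin m → Bool) : Bool := wd w (m - 1)

lemma prefixCount_snoc (v : Fin m → Bool) (c' c : Bool) (k : ℕ) :
    prefixCount (Fin.snoc v c' : Fin (m + 1) → Bool) c k =
      prefixCount v c k + if m < k ∧ c' = c then 1 else 0 := by
  simp only [prefixCount, card_filter, Fin.sum_univ_castSucc, Fin.snoc_castSucc,
    Fin.val_castSucc, Fin.snoc_last, Fin.val_last]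

lemma prefixCount_of_le (w : Fin m → Bool) (c : Bool) {k : ℕ} (h : m ≤ k) :
    prefixCount w c k = prefixCount w c m := by
  simp only [prefixCount]
  congr 1
  exact filter_congr fun i _ => by simp [i.is_lt, i.is_lt.trans_le h]

lemma prefixCount_snoc_self (v : Fin m → Bool) (c' c : Bool) :
    prefixCount (Fin.snoc v c' : Fin (m + 1) → Bool) c (m + 1) =
      prefixCount v c m + if c' = c then 1 else 0 := by
  simp [prefixCount_snoc, prefixCount_of_le v c m.le_succ]

lemma prefixCount_true_add_false (w : Fin m → Bool) :
    prefixCount w true m + prefixCount w false m = m := by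
  have hone : ∀ i : Fin m, ((if w i = true then 1 else 0) + if w i = false then 1 else 0) = 1 :=
    fun i => by cases w i <;> rfl
  simp only [prefixCount, card_filter, Fin.is_lt, true_and, ← sum_add_distrib, hone]
  simp

lemma isBallot_snoc_iff (v : Fin m → Bool) (c : Bool) :
    IsBallot (Fin.snoc v c : Fin (m + 1) → Bool) ↔
      IsBallot v ∧ prefixCount v true m + (if c = true then 1 else 0) ≤
        prefixCount v false m + if c = false then 1 else 0 := by
  simp only [IsBallot, prefixCount_snoc]
  constructor
  · intro h
    refine ⟨fun k => ?_, by
      simpa [prefixCount_of_le v _ m.le_succ] using h (m + 1)⟩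
    rcases le_or_gt k m with hk | hk
    · simpa [Nat.not_lt.mpr hk] using h k
    · rw [prefixCount_of_le v true hk.le, prefixCount_of_le v false hk.le]
      simpa using h m
  · rintro ⟨h, hlast⟩ k
    rcases le_or_gt k m with hk | hk
    · simpa [Nat.not_lt.mpr hk] using h k
    · rw [prefixCount_of_le v true hk.le, prefixCount_of_le v false hk.le]
      simpa [hk] using hlast

lemma wd_snoc_of_lt (v : Fin m → Bool) (c : Bool) {i : ℕ} (h : i < m) :
    wd (Fin.snoc v c : Fin (m + 1) → Bool) i = wd v i := by
  simp [wd, Fin.snoc, h, h.trans m.lt_succ_self]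

lemma wd_snoc_self (v : Fin m → Bool) (c : Bool) : wd (Fin.snoc v c : Fin (m + 1) → Bool) m = c := by
  simp [wd, Fin.snoc]

@[simp] lemma lastLetter_snoc (v : Fin m → Bool) (c : Bool) :
    lastLetter (Fin.snoc v c : Fin (m + 1) → Bool) = c :=
  wd_snoc_self v c

lemma snoc_init_of_lastLetter {w : Fin (m + 1) → Bool} {c : Bool} (h : lastLetter w = c) :
    Fin.snoc (Fin.init w) c = w := by
  have hlast : w (Fin.last m) = c := by
    simp only [lastLetter, wd, add_tsub_cancel_right, m.lt_succ_self, dif_pos] at h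
    exact h
  rw [← hlast, Fin.snoc_init_self]

lemma wordMaj_snoc (v : Fin m → Bool) (c : Bool) :
    wordMaj (Fin.snoc v c : Fin (m + 1) → Bool) =
      wordMaj v + if lastLetter v = true ∧ c = false then m else 0 := by
  cases m with
  | zero => simp [wordMaj, lastLetter, wd]
  | succ t =>
    simp only [wordMaj, lastLetter, sum_filter, add_tsub_cancel_right, sum_range_succ,
      wd_snoc_of_lt v c t.lt_succ_self, wd_snoc_self]
    congr 1
    refine sum_congr rfl fun i hi => ?_
    have hi : i < t := mem_range.mp hi
    rw [wd_snoc_of_lt v c (by omega), wd_snoc_of_lt v c (by omega)]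

lemma sum_filter_lastLetter_eq {M : Type*} [AddCommMonoid M] (s : Finset (Fin (m + 1) → Bool))
    (c : Bool) (f : (Fin (m + 1) → Bool) → M) :
    ∑ w ∈ s.filter (fun w => lastLetter w = c), f w =
      ∑ v ∈ univ.filter (fun v : Fin m → Bool => Fin.snoc v c ∈ s), f (Fin.snoc v c) := by
  symm
  apply sum_nbij' (fun v : Fin m → Bool => (Fin.snoc v c : Fin (m + 1) → Bool))
    (fun w : Fin (m + 1) → Bool => (Fin.init w : Fin m → Bool))
  · intro v hv
    simpa using hv
  · intro w hw
    rw [mem_filter] at hw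
    simpa [snoc_init_of_lastLetter hw.2] using hw.1
  · intro v _
    exact Fin.init_snoc _ _
  · intro w hw
    exact snoc_init_of_lastLetter (mem_filter.mp hw).2
  · intro v _
    rfl

open scoped Classical in
noncomputable def ballotWords (m b : ℕ) : Finset (Fin m → Bool) :=
  univ.filter fun w => prefixCount w true m = b ∧ IsBallot w

lemma mem_ballotWords {b : ℕ} {w : Fin m → Bool} :
    w ∈ ballotWords m b ↔ prefixCount w true m = b ∧ IsBallot w := by
  simp [ballotWords]

lemma snoc_false_mem_ballotWords_iff {b : ℕ} (v : Fin m → Bool) :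
    Fin.snoc v false ∈ ballotWords (m + 1) b ↔ v ∈ ballotWords m b := by
  simp only [mem_ballotWords, isBallot_snoc_iff, prefixCount_snoc_self]
  constructor
  · rintro ⟨hb, hv, -⟩
    simpa using And.intro hb hv
  · rintro ⟨hb, hv⟩
    exact ⟨by simpa using hb, hv, by simpa using (hv m).trans (Nat.le_succ _)⟩

lemma snoc_true_mem_ballotWords_iff {b : ℕ} (v : Fin m → Bool) (h : 2 * (b + 1) ≤ m + 1) :
    Fin.snoc v true ∈ ballotWords (m + 1) (b + 1) ↔ v ∈ ballotWords m b := by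
  simp only [mem_ballotWords, isBallot_snoc_iff, prefixCount_snoc_self]
  have htotal := prefixCount_true_add_false v
  constructor
  · rintro ⟨hb, hv, -⟩
    exact ⟨by simpa using hb, hv⟩
  · rintro ⟨hb, hv⟩
    simp only [if_true, Bool.true_eq_false, if_false]
    exact ⟨by omega, hv, by omega⟩

lemma ballotWords_eq_empty {b : ℕ} (h : m < 2 * b) : ballotWords m b = ∅ := by
  refine eq_empty_of_forall_notMem fun w hw => ?_
  obtain ⟨hb, hw⟩ := mem_ballotWords.mp hw
  have := hw m
  have := prefixCount_true_add_false w
  omega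

noncomputable def majPoly (s : Finset (Fin m → Bool)) : ℤ[X] := ∑ w ∈ s, X ^ wordMaj w

lemma majPoly_ballotWords_zero : majPoly (ballotWords m 0) = 1 := by
  have hzero : ballotWords m 0 = {fun _ => false} := by
    ext w
    simp only [mem_ballotWords, mem_singleton]
    constructor
    · rintro ⟨h, -⟩
      funext i
      simp only [prefixCount, card_eq_zero, filter_eq_empty_iff] at h
      simpa [i.is_lt] using h (mem_univ i)
    · rintro rfl
      simp [IsBallot, prefixCount]
  simp [majPoly, hzero, wordMaj, wd]

lemma majPoly_filter_lastLetter_ballotWords_succ_succ {b : ℕ} (h : 2 * (b + 1) ≤ m + 1) :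
    majPoly ((ballotWords (m + 1) (b + 1)).filter fun w => lastLetter w = true) =
      majPoly (ballotWords m b) := by
  have hset : univ.filter (fun v : Fin m → Bool => Fin.snoc v true ∈ ballotWords (m + 1) (b + 1)) =
      ballotWords m b := by
    ext v
    simp [snoc_true_mem_ballotWords_iff v h]
  rw [majPoly, sum_filter_lastLetter_eq, hset, majPoly]
  simp [wordMaj_snoc]

lemma majPoly_ballotWords_succ (b : ℕ) :
    majPoly (ballotWords (m + 1) b) =
      majPoly (ballotWords m b) +
        (X ^ m - 1) * majPoly ((ballotWords m b).filter fun w => lastLetter w = true) +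
        majPoly ((ballotWords (m + 1) b).filter fun w => lastLetter w = true) := by
  have hset : univ.filter (fun v : Fin m → Bool => Fin.snoc v false ∈ ballotWords (m + 1) b) =
      ballotWords m b := by
    ext v
    simp [snoc_false_mem_ballotWords_iff]
  have hsnoc : ∀ v : Fin m → Bool, (X : ℤ[X]) ^ wordMaj (Fin.snoc v false : Fin (m + 1) → Bool) =
      X ^ wordMaj v + if lastLetter v = true then (X ^ m - 1) * X ^ wordMaj v else 0 := by
    intro v
    rw [wordMaj_snoc]
    split_ifs <;> simp_all [pow_add]
    ring
  have hlast_false : ∑ w ∈ (ballotWords (m + 1) b).filter (fun w => ¬lastLetter w = true),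
      X ^ wordMaj w = majPoly (ballotWords m b) +
        (X ^ m - 1) * majPoly ((ballotWords m b).filter fun w => lastLetter w = true) := by
    simp only [Bool.not_eq_true, sum_filter_lastLetter_eq, hset, hsnoc, sum_add_distrib,
      ← sum_filter, ← mul_sum]
    rfl
  rw [majPoly, ← sum_filter_not_add_sum_filter _ fun w => lastLetter w = true, hlast_false]
  rfl

end Words

theorem majPoly_ballotWords (m b : ℕ) (h : 2 * b ≤ m) : majPoly (ballotWords m b) = qBallot m b := by
  induction m using Nat.strong_induction_on generalizing b with
  | _ m ih =>
  cases b with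
  | zero => simp [majPoly_ballotWords_zero, qBallot]
  | succ c =>
    obtain ⟨m, rfl⟩ : ∃ m', m = m' + 1 := ⟨m - 1, by omega⟩
    rw [majPoly_ballotWords_succ, majPoly_filter_lastLetter_ballotWords_succ_succ h]
    rcases (by omega : 2 * (c + 1) ≤ m ∨ m = 2 * c + 1) with hlt | rfl
    · obtain ⟨m, rfl⟩ : ∃ m', m = m' + 1 := ⟨m - 1, by omega⟩
      rw [majPoly_filter_lastLetter_ballotWords_succ_succ hlt, ih _ (by omega) _ hlt,
        ih _ (by omega) c (by omega), ih _ (by omega) c (by omega), qBallot_add_two]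
      ring
    · rw [ballotWords_eq_empty (by omega), filter_empty, ih _ (by omega) c (by omega),
        ← qBallot_two_mul_add_two]
      simp [majPoly]

open scoped Classical in
lemma filter_isDyck_eq_ballotWords (n : ℕ) :
    univ.filter (fun w : Fin (2 * n) → Bool => IsDyck n w) = ballotWords (2 * n) n := by
  ext w
  have htotal := prefixCount_true_add_false w
  have hfalse : (univ.filter fun i => w i = false).card = prefixCount w false (2 * n) := by
    simp [prefixCount]
  rw [mem_filter, mem_ballotWords, IsDyck, hfalse]
  simp only [mem_univ, true_and]
  exact and_congr ⟨fun _ => by omega, fun _ => by omega⟩ Iff.rfl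

lemma map_qInt (m : ℕ) : (qInt m).map (Nat.castRingHom ℤ) = ∑ i ∈ range m, X ^ i := by
  simp [qInt, Polynomial.map_sum]

open scoped Classical in
/-- `∑_{d ∈ Dyck(n)} q^{maj d} = (1/[n+1]) qbinom(2n, n)`, stated with the
denominator cleared. -/
theorem maj_gen_dyck_eq_qCatalan (n : ℕ) :
    qInt (n + 1) *
      (∑ w ∈ univ.filter (fun w : Fin (2 * n) → Bool => IsDyck n w),
        (X : Polynomial ℕ) ^ wordMaj w) = qBinom (2 * n) n := by
  apply map_injective (Nat.castRingHom ℤ) Nat.cast_injective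
  rw [filter_isDyck_eq_ballotWords, Polynomial.map_mul, Polynomial.map_sum, map_qInt]
  simp only [Polynomial.map_pow, Polynomial.map_X]
  rw [← majPoly, majPoly_ballotWords (2 * n) n le_rfl]
  exact geom_sum_mul_qBallot_two_mul_self n
end

section
/- For every r-Stirling permutation ν of the set {2,...,n} and for each integer m in [0, r(n-1)], there is exactly one position at which inserting the block 1^r into ν increases MAJ by exactly m; i.e., the multiset {MAJ(ν_i) - MAJ(ν) : 0 ≤ i ≤ r(n-1)} equals {0, 1, ..., r(n-1)}, where ν_i denotes ν with 1^r inserted after position i. -/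
/-!
Call `j` an `r`-descent of a word if `w_j > w_{j+1} = ⋯ = w_{j+r}`; two `r`-descents are at
least `r` apart. As every letter exceeds `1`, inserting `1^r` after position `i` keeps the
descents `j` with `j + r ≤ i`, shifts the descents `j > i` by `r`, creates the descent `i`
(for `i ≥ 1`) and destroys the descent `j` with `j ≤ i < j + r`, if there is one. So `MAJ` grows
by `g(i) = i + r · #{descents > i} - j`. On the window `[j, j + r)` of a descent, `g` takes the
values `r · #{descents > j} + [0, r)`, and these blocks tile `[0, r d)`, `d` the number of
descents; off the windows `g` is strictly increasing with values `≥ r d`. Hence `g` is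
injective, and it maps `[0, M]` into itself, so it is a bijection of `[0, M]`.
-/

open Finset

/-- The letter of the word `w` at the 1-based position `p` (junk `0` out of range). -/
def sv {m : ℕ} (w : Fin m → ℕ) (p : ℕ) : ℕ :=
  if h : p - 1 < m then w ⟨p - 1, h⟩ else 0

open scoped Classical in
/-- `MAJ(ν) = ∑_{j ∈ J(ν)} j` where
`J(ν) = {1 ≤ j ≤ m - r : ν_j > ν_{j+1} = ν_{j+2} = ⋯ = ν_{j+r}}` (1-based). -/
noncomputable def stMAJ (r : ℕ) {m : ℕ} (w : Fin m → ℕ) : ℕ :=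
  ∑ j ∈ (Finset.Icc 1 (m - r)).filter
      (fun j => (∀ t ∈ Finset.Icc 1 r, sv w (j + t) = sv w (j + 1)) ∧
        sv w (j + 1) < sv w j), j

/-- The word obtained from `w` by inserting `r` consecutive copies of the letter `1`
immediately after the `i`-th letter (0 ≤ i ≤ m). -/
def insertOnes (r : ℕ) {m : ℕ} (w : Fin m → ℕ) (i : ℕ) (k : Fin (m + r)) : ℕ :=
  if h1 : (k : ℕ) < i ∧ (k : ℕ) < m then w ⟨k, h1.2⟩
  else if (k : ℕ) < i + r then 1
  else if h3 : (k : ℕ) - r < m then w ⟨(k : ℕ) - r, h3⟩ else 0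

namespace StirlingMAJ

def Spaced (r : ℕ) (D : Finset ℕ) : Prop :=
  ∀ j ∈ D, ∀ j' ∈ D, j < j' → j + r ≤ j'

/-- For spaced `D` at most one `j ∈ D` has `i` in its window `[j, j + r)`; this is that `j`,
or `0`. -/
def windowSum (r : ℕ) (D : Finset ℕ) (i : ℕ) : ℕ :=
  ∑ j ∈ D with j ≤ i ∧ i < j + r, j

/-- The subtraction never truncates when `D` is spaced, by `Spaced.windowSum_le`. -/
def gain (r : ℕ) (D : Finset ℕ) (i : ℕ) : ℕ :=
  i + r * #{j ∈ D | i < j} - windowSum r D i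

theorem sum_eq_add_windowSum_add (r : ℕ) (D : Finset ℕ) (i : ℕ) :
    ∑ j ∈ D, j = ∑ j ∈ D with j + r ≤ i, j + windowSum r D i + ∑ j ∈ D with i < j, j := by
  simp only [windowSum, sum_filter, ← sum_add_distrib]
  refine sum_congr rfl fun j _ => ?_
  split_ifs <;> omega

theorem windowSum_eq_zero {r : ℕ} {D : Finset ℕ} {i : ℕ} (h : ∀ j ∈ D, j ≤ i → j + r ≤ i) :
    windowSum r D i = 0 :=
  sum_eq_zero fun j hj => by
    obtain ⟨hjD, hji, hij⟩ := mem_filter.1 hj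
    have := h j hjD hji
    omega

namespace Spaced

variable {r : ℕ} {D : Finset ℕ} {i j : ℕ}

theorem mono {D' : Finset ℕ} (hD : Spaced r D) (h : D' ⊆ D) : Spaced r D' :=
  fun j hj j' hj' => hD j (h hj) j' (h hj')

theorem mul_card_le (hD : Spaced r D) {a b : ℕ} (h : ∀ j ∈ D, a ≤ j ∧ j + r ≤ b) :
    r * #D ≤ b - a := by
  induction D using Finset.induction_on_max generalizing b with
  | empty => simp
  | insert c s hlt ih =>
    have hc := h c (mem_insert_self c s)
    have hs : r * #s ≤ c - a := ih (hD.mono (subset_insert c s)) fun j hj =>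
      ⟨(h j (mem_insert_of_mem hj)).1,
        hD j (mem_insert_of_mem hj) c (mem_insert_self c s) (hlt j hj)⟩
    rw [card_insert_of_notMem fun hcs => lt_irrefl c (hlt c hcs), mul_add_one]
    omega

theorem windowSum_eq (hD : Spaced r D) (hj : j ∈ D) (hji : j ≤ i) (hij : i < j + r) :
    windowSum r D i = j := by
  have hsingle : {x ∈ D | x ≤ i ∧ i < x + r} = {j} := by
    refine eq_singleton_iff_unique_mem.2 ⟨mem_filter.2 ⟨hj, hji, hij⟩, fun x hx => ?_⟩
    obtain ⟨hxD, hxi, hix⟩ := mem_filter.1 hx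
    rcases lt_trichotomy x j with h | h | h
    · have := hD x hxD j hj h; omega
    · exact h
    · have := hD j hj x hxD h; omega
  rw [windowSum, hsingle, sum_singleton]

theorem windowSum_le (hD : Spaced r D) (i : ℕ) : windowSum r D i ≤ i := by
  by_cases hgap : ∀ j ∈ D, j ≤ i → j + r ≤ i
  · simp [windowSum_eq_zero hgap]
  · push Not at hgap
    obtain ⟨j, hj, hji, hij⟩ := hgap
    rw [hD.windowSum_eq hj hji hij]
    exact hji

theorem gain_of_mem_window (hD : Spaced r D) (hj : j ∈ D) (hji : j ≤ i) (hij : i < j + r) :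
    gain r D i = i - j + r * #{x ∈ D | j < x} := by
  have hafter : {x ∈ D | i < x} = {x ∈ D | j < x} := by
    refine filter_congr fun x hx => ⟨fun h => by omega, fun h => ?_⟩
    have := hD j hj x hx h
    omega
  rw [gain, hD.windowSum_eq hj hji hij, hafter]
  omega

theorem gain_lt_of_mem_window (hD : Spaced r D) (hj : j ∈ D) (hji : j ≤ i) (hij : i < j + r) :
    gain r D i < r * #{x ∈ D | j ≤ x} := by
  have hcard : #{x ∈ D | j < x} + 1 ≤ #{x ∈ D | j ≤ x} :=
    card_lt_card <| (ssubset_iff_of_subset (monotone_filter_right D fun _ _ => le_of_lt)).2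
      ⟨j, mem_filter.2 ⟨hj, le_rfl⟩, by simp⟩
  have := Nat.mul_le_mul_left r hcard
  rw [mul_add_one] at this
  rw [hD.gain_of_mem_window hj hji hij]
  omega

theorem mul_card_le_gain (hD : Spaced r D) (hgap : ∀ j ∈ D, j ≤ i → j + r ≤ i) :
    r * #D ≤ gain r D i := by
  have hbefore : r * #{x ∈ D | x ≤ i} ≤ i :=
    (hD.mono (filter_subset _ _)).mul_card_le fun j hj =>
      ⟨Nat.zero_le j, hgap j (mem_filter.1 hj).1 (mem_filter.1 hj).2⟩
  have hsplit := card_filter_add_card_filter_not (s := D) (· ≤ i)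
  simp only [not_le] at hsplit
  rw [gain, windowSum_eq_zero hgap, ← hsplit, mul_add]
  omega

theorem gain_lt_gain (hD : Spaced r D) {i' : ℕ} (hgap : ∀ j ∈ D, j ≤ i → j + r ≤ i)
    (hgap' : ∀ j ∈ D, j ≤ i' → j + r ≤ i') (hii' : i < i') : gain r D i < gain r D i' := by
  have hbetween : r * #{x ∈ {x ∈ D | i < x} | x ≤ i'} ≤ i' - (i + 1) :=
    (hD.mono ((filter_subset _ _).trans (filter_subset _ _))).mul_card_le fun j hj => by
      simp only [mem_filter] at hj
      exact ⟨hj.1.2, hgap' j hj.1.1 hj.2⟩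
  have hsplit := card_filter_add_card_filter_not (s := {x ∈ D | i < x}) (· ≤ i')
  have hafter : {x ∈ {x ∈ D | i < x} | ¬x ≤ i'} = {x ∈ D | i' < x} := by
    rw [filter_filter]
    exact filter_congr fun x _ => by omega
  rw [hafter] at hsplit
  rw [gain, gain, windowSum_eq_zero hgap, windowSum_eq_zero hgap', ← hsplit, mul_add]
  omega

theorem gain_ne_gain (hD : Spaced r D) {i' : ℕ} (hii' : i < i') : gain r D i ≠ gain r D i' := by
  by_cases hgap : ∀ j ∈ D, j ≤ i → j + r ≤ i <;> by_cases hgap' : ∀ j ∈ D, j ≤ i' → j + r ≤ i'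
  · exact (hD.gain_lt_gain hgap hgap' hii').ne
  · push Not at hgap'
    obtain ⟨j', hj', hj'i', hi'j'⟩ := hgap'
    have := hD.gain_lt_of_mem_window hj' hj'i' hi'j'
    have := Nat.mul_le_mul_left r (card_filter_le D (j' ≤ ·))
    have := hD.mul_card_le_gain hgap
    omega
  · push Not at hgap
    obtain ⟨j, hj, hji, hij⟩ := hgap
    have := hD.gain_lt_of_mem_window hj hji hij
    have := Nat.mul_le_mul_left r (card_filter_le D (j ≤ ·))
    have := hD.mul_card_le_gain hgap'
    omega
  · push Not at hgap hgap'
    obtain ⟨j, hj, hji, hij⟩ := hgap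
    obtain ⟨j', hj', hj'i', hi'j'⟩ := hgap'
    rcases lt_trichotomy j j' with hjj' | rfl | hj'j
    · have := hD.gain_lt_of_mem_window hj' hj'i' hi'j'
      have : r * #{x ∈ D | j' ≤ x} ≤ r * #{x ∈ D | j < x} := Nat.mul_le_mul_left r <|
        card_le_card <| monotone_filter_right D fun _ _ => hjj'.trans_le
      have := hD.gain_of_mem_window hj hji hij
      omega
    · rw [hD.gain_of_mem_window hj hji hij, hD.gain_of_mem_window hj hj'i' hi'j']
      omega
    · have := hD j' hj' j hj hj'j
      omega

theorem injective_gain (hD : Spaced r D) : Function.Injective (gain r D) :=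
  Function.Injective.of_lt_imp_ne fun _ _ => hD.gain_ne_gain

theorem gain_le (hD : Spaced r D) {M : ℕ} (hbound : ∀ j ∈ D, j + r ≤ M) (hi : i ≤ M) :
    gain r D i ≤ M := by
  have := (hD.mono (filter_subset (i < ·) D)).mul_card_le (a := i + 1) (b := M) fun j hj =>
    ⟨(mem_filter.1 hj).2, hbound j (mem_filter.1 hj).1⟩
  rw [gain]
  omega

theorem bijOn_gain (hD : Spaced r D) {M : ℕ} (hbound : ∀ j ∈ D, j + r ≤ M) :
    Set.BijOn (gain r D) (Set.Iic M) (Set.Iic M) :=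
  ((Set.finite_Iic M).injOn_iff_bijOn_of_mapsTo fun _ hi => hD.gain_le hbound hi).1
    hD.injective_gain.injOn

end Spaced

def IsRDescent (r : ℕ) {m : ℕ} (w : Fin m → ℕ) (j : ℕ) : Prop :=
  (∀ t ∈ Icc 1 r, sv w (j + t) = sv w (j + 1)) ∧ sv w (j + 1) < sv w j

open scoped Classical in
/-- The set `J(ν)` of the paper. -/
noncomputable def descentSet (r : ℕ) {m : ℕ} (w : Fin m → ℕ) : Finset ℕ :=
  {j ∈ Icc 1 (m - r) | IsRDescent r w j}

section Word

variable {r m : ℕ} {w : Fin m → ℕ} {i j : ℕ}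

theorem stMAJ_eq_sum_descentSet (r : ℕ) (w : Fin m → ℕ) :
    stMAJ r w = ∑ j ∈ descentSet r w, j := by
  unfold stMAJ descentSet IsRDescent
  congr

theorem mem_descentSet : j ∈ descentSet r w ↔ (1 ≤ j ∧ j + r ≤ m) ∧ IsRDescent r w j := by
  simp only [descentSet, mem_filter, mem_Icc]
  exact and_congr_left fun _ => by omega

theorem spaced_descentSet (r : ℕ) (w : Fin m → ℕ) : Spaced r (descentSet r w) := by
  intro j hj j' hj' hjj'
  by_contra! hclose
  obtain ⟨-, hblock, -⟩ := mem_descentSet.1 hj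
  obtain ⟨-, -, hdesc'⟩ := mem_descentSet.1 hj'
  have h₁ := hblock (j' - j) (mem_Icc.2 ⟨by omega, by omega⟩)
  have h₂ := hblock (j' - j + 1) (mem_Icc.2 ⟨by omega, by omega⟩)
  rw [Nat.add_sub_cancel' hjj'.le] at h₁
  rw [← add_assoc, Nat.add_sub_cancel' hjj'.le] at h₂
  omega

theorem one_lt_sv (hw : ∀ k, 1 < w k) {p : ℕ} (hp : 1 ≤ p) (hpm : p ≤ m) : 1 < sv w p := by
  rw [sv, dif_pos (by omega)]
  exact hw _

theorem sv_insertOnes_of_le {p : ℕ} (hp : 1 ≤ p) (hpi : p ≤ i) (hi : i ≤ m) :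
    sv (insertOnes r w i) p = sv w p := by
  simp only [sv, insertOnes]
  split_ifs <;> first | rfl | omega

theorem sv_insertOnes_of_mem_block {p : ℕ} (hip : i < p) (hpi : p ≤ i + r) (hi : i ≤ m) :
    sv (insertOnes r w i) p = 1 := by
  simp only [sv, insertOnes]
  split_ifs <;> omega

theorem sv_insertOnes_of_lt {p : ℕ} (hp : i + r < p) :
    sv (insertOnes r w i) p = sv w (p - r) := by
  simp only [sv, insertOnes]
  split_ifs <;> first | omega | (congr 1; ext; simp; omega)

theorem isRDescent_congr {m' : ℕ} {u : Fin m' → ℕ} {a b : ℕ} (hr : 1 ≤ r)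
    (h : ∀ t ≤ r, sv u (a + t) = sv w (b + t)) : IsRDescent r u a ↔ IsRDescent r w b := by
  have h₀ := h 0 (Nat.zero_le r)
  rw [add_zero, add_zero] at h₀
  simp only [IsRDescent, h₀, h 1 hr]
  exact and_congr_left fun _ => forall₂_congr fun t ht => by rw [h t (mem_Icc.1 ht).2]

theorem isRDescent_insertOnes_iff_of_add_le (hr : 1 ≤ r) (hj : 1 ≤ j) (hji : j + r ≤ i)
    (hi : i ≤ m) : IsRDescent r (insertOnes r w i) j ↔ IsRDescent r w j :=
  isRDescent_congr hr fun _ _ => sv_insertOnes_of_le (by omega) (by omega) hi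

theorem isRDescent_insertOnes_iff_of_lt (hr : 1 ≤ r) (hij : i + r < j) :
    IsRDescent r (insertOnes r w i) j ↔ IsRDescent r w (j - r) :=
  isRDescent_congr hr fun t _ => by
    rw [sv_insertOnes_of_lt (by omega), Nat.sub_add_comm (by omega)]

theorem isRDescent_insertOnes_self (hr : 1 ≤ r) (hw : ∀ k, 1 < w k) (hi₁ : 1 ≤ i)
    (hi : i ≤ m) : IsRDescent r (insertOnes r w i) i := by
  refine ⟨fun t ht => ?_, ?_⟩
  · have := mem_Icc.1 ht
    rw [sv_insertOnes_of_mem_block (by omega) (by omega) hi,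
      sv_insertOnes_of_mem_block (by omega) (by omega) hi]
  · rw [sv_insertOnes_of_mem_block (by omega) (by omega) hi,
      sv_insertOnes_of_le hi₁ le_rfl hi]
    exact one_lt_sv hw hi₁ hi

theorem not_isRDescent_insertOnes (hr : 1 ≤ r) (hw : ∀ k, 1 < w k) (hij : i < j + r)
    (hji : j ≤ i + r) (hne : j ≠ i) (hjm : j ≤ m) (hi : i ≤ m) :
    ¬IsRDescent r (insertOnes r w i) j := by
  rintro ⟨hblock, hdesc⟩
  rcases Nat.lt_or_gt_of_ne hne with hlt | hgt
  · -- the letter `j + 1` is from `w`, the letter `j + r` is an inserted `1`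
    have h₁ := sv_insertOnes_of_le (r := r) (w := w) (p := j + 1) (by omega) hlt hi
    have h₂ := hblock r (mem_Icc.2 ⟨hr, le_rfl⟩)
    rw [sv_insertOnes_of_mem_block (by omega) (by omega) hi] at h₂
    have := one_lt_sv hw (p := j + 1) (by omega) (by omega)
    omega
  · rw [sv_insertOnes_of_mem_block hgt hji hi] at hdesc
    by_cases hnext : j + 1 ≤ i + r
    · rw [sv_insertOnes_of_mem_block (by omega) hnext hi] at hdesc
      omega
    · rw [sv_insertOnes_of_lt (by omega)] at hdesc
      have := one_lt_sv hw (p := j + 1 - r) (by omega) (by omega)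
      omega

theorem isRDescent_insertOnes_iff (hr : 1 ≤ r) (hw : ∀ k, 1 < w k) (hj : 1 ≤ j) (hjm : j ≤ m)
    (hi : i ≤ m) :
    IsRDescent r (insertOnes r w i) j ↔
      j = i ∨ (j + r ≤ i ∧ IsRDescent r w j) ∨ (i + r < j ∧ IsRDescent r w (j - r)) := by
  by_cases hlo : j + r ≤ i
  · rw [isRDescent_insertOnes_iff_of_add_le hr hj hlo hi]
    simp only [hlo, true_and, show j ≠ i by omega, show ¬i + r < j by omega, false_and,
      false_or, or_false]
  by_cases hhi : i + r < j
  · rw [isRDescent_insertOnes_iff_of_lt hr hhi]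
    simp only [hlo, hhi, true_and, show j ≠ i by omega, false_and, false_or]
  by_cases hself : j = i
  · subst hself
    simp only [isRDescent_insertOnes_self hr hw hj hi, true_or]
  · simp only [not_isRDescent_insertOnes hr hw (by omega) (by omega) hself hjm hi, hself, hlo,
      hhi, false_and, or_self]

/-- `erase 0`: position `0` is never a descent, so inserting at `i = 0` creates none. -/
theorem descentSet_insertOnes (hr : 1 ≤ r) (hw : ∀ k, 1 < w k) (hi : i ≤ m) :
    descentSet r (insertOnes r w i) =
      (insert i ({j ∈ descentSet r w | j + r ≤ i} ∪
        {j ∈ descentSet r w | i < j}.map (addRightEmbedding r))).erase 0 := by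
  ext j
  simp only [mem_erase, mem_insert, mem_union, mem_filter, mem_map, addRightEmbedding_apply,
    mem_descentSet]
  constructor
  · rintro ⟨⟨hj, hjm⟩, hdesc⟩
    rcases (isRDescent_insertOnes_iff hr hw hj (by omega) hi).1 hdesc with
      rfl | ⟨hlo, hdesc⟩ | ⟨hhi, hdesc⟩
    · exact ⟨by omega, Or.inl rfl⟩
    · exact ⟨by omega, Or.inr (Or.inl ⟨⟨⟨hj, by omega⟩, hdesc⟩, hlo⟩)⟩
    · exact ⟨by omega, Or.inr (Or.inr ⟨j - r, ⟨⟨⟨by omega, by omega⟩, hdesc⟩, by omega⟩,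
        by omega⟩)⟩
  · rintro ⟨hj, rfl | ⟨⟨⟨hj₁, hjm⟩, hdesc⟩, hlo⟩ | ⟨a, ⟨⟨⟨ha₁, ham⟩, hdesc⟩, hia⟩, rfl⟩⟩
    · exact ⟨⟨by omega, by omega⟩, isRDescent_insertOnes_self hr hw (by omega) hi⟩
    · exact ⟨⟨hj₁, by omega⟩, (isRDescent_insertOnes_iff_of_add_le hr hj₁ hlo hi).2 hdesc⟩
    · refine ⟨⟨by omega, by omega⟩, (isRDescent_insertOnes_iff_of_lt hr (by omega)).2 ?_⟩
      rwa [Nat.add_sub_cancel]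

theorem sum_descentSet_insertOnes (hr : 1 ≤ r) (hw : ∀ k, 1 < w k) (hi : i ≤ m) :
    ∑ j ∈ descentSet r (insertOnes r w i), j =
      ∑ j ∈ descentSet r w with j + r ≤ i, j + i +
        ∑ j ∈ descentSet r w with i < j, (j + r) := by
  have hdisj : Disjoint {j ∈ descentSet r w | j + r ≤ i}
      ({j ∈ descentSet r w | i < j}.map (addRightEmbedding r)) := by
    simp only [disjoint_left, mem_filter, mem_map, addRightEmbedding_apply]
    rintro _ ⟨-, hlo⟩ ⟨a, ⟨-, hia⟩, rfl⟩
    omega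
  have hnotMem : i ∉ {j ∈ descentSet r w | j + r ≤ i} ∪
      {j ∈ descentSet r w | i < j}.map (addRightEmbedding r) := by
    simp only [mem_union, mem_filter, mem_map, addRightEmbedding_apply]
    rintro (⟨-, hlo⟩ | ⟨a, ⟨-, hia⟩, hai⟩) <;> omega
  rw [descentSet_insertOnes hr hw hi, sum_erase (f := fun j => j) _ rfl, sum_insert hnotMem,
    sum_union hdisj, sum_map]
  simp only [addRightEmbedding_apply]
  ring

theorem stMAJ_insertOnes (hr : 1 ≤ r) (hw : ∀ k, 1 < w k) (hi : i ≤ m) :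
    stMAJ r (insertOnes r w i) = stMAJ r w + gain r (descentSet r w) i := by
  have hsplit := sum_eq_add_windowSum_add r (descentSet r w) i
  have hwindow := (spaced_descentSet r w).windowSum_le i
  rw [stMAJ_eq_sum_descentSet, stMAJ_eq_sum_descentSet, sum_descentSet_insertOnes hr hw hi,
    sum_add_distrib, sum_const, smul_eq_mul, mul_comm _ r, gain]
  omega

end Word

end StirlingMAJ

open scoped Classical in
theorem insert_ones_MAJ_bijective_general (r n : ℕ) (hr : 1 ≤ r)
    (w : Fin (r * (n - 1)) → ℕ)
    (hval : ∀ i, 2 ≤ w i ∧ w i ≤ n) :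
    ∀ m₀ ≤ r * (n - 1), ∃! i, i ≤ r * (n - 1) ∧
      stMAJ r (insertOnes r w i) = stMAJ r w + m₀ := by
  intro m₀ hm₀
  have hw : ∀ k, 1 < w k := fun k => (hval k).1
  have hbij := (StirlingMAJ.spaced_descentSet r w).bijOn_gain fun _ hj =>
    (StirlingMAJ.mem_descentSet.1 hj).1.2
  obtain ⟨i, hi, rfl⟩ := hbij.surjOn hm₀
  refine ⟨i, ⟨hi, StirlingMAJ.stMAJ_insertOnes hr hw hi⟩, fun i' ⟨hi', hgain⟩ => ?_⟩
  rw [StirlingMAJ.stMAJ_insertOnes hr hw hi', Nat.add_left_cancel_iff] at hgain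
  exact hbij.injOn hi' hi hgain

open scoped Classical in
/-- For an `r`-Stirling permutation `w` of the set `{2,…,n}` and every
`m₀ ∈ [0, r(n-1)]`, there is exactly one position `i ∈ [0, r(n-1)]` such that
inserting the block `1^r` after position `i` increases `MAJ` by exactly `m₀`. -/
theorem insert_ones_MAJ_bijective (r n : ℕ) (hr : 1 ≤ r) (hn : 1 ≤ n)
    (w : Fin (r * (n - 1)) → ℕ)
    (hval : ∀ i, 2 ≤ w i ∧ w i ≤ n)
    (hcount : ∀ v, 2 ≤ v → v ≤ n →
      (univ.filter (fun i => w i = v)).card = r)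
    (hstir : ∀ a b c : Fin (r * (n - 1)), a < b → b < c → w a = w c → w a ≤ w b) :
    ∀ m₀ ≤ r * (n - 1), ∃! i, i ≤ r * (n - 1) ∧
      stMAJ r (insertOnes r w i) = stMAJ r w + m₀ :=
  insert_ones_MAJ_bijective_general r n hr w hval
end
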